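/- arXiv:1405.0098 — 7 statements merged into one kernel-verified Lean document; each statement's English description precedes it below -/
import Mathlib

section
/- Let P > 0, A > 0, k_min > 0 and let Ω, μ, T, M, δ be as in the billiard setup. Let k : [0,P] → ℝ be measurable with k(x) ≥ k_min for all x and ∫₀^P k(x) dx = 2π. Let L : Ω → ℝ be measurable and nonnegative with ∫_Ω L dμ = 2πA, and let a : Ω → ℝ be measurable such that for every z = (x,φ) ∈ M one has 0 < a(z) < L(z) and 1/a(z) + 1/(L(T⁻¹ z) − a(T⁻¹ z)) = 2 k(x) / sin φ (the mirror equation). Then δ ≥ (P² − 4πA)·k_min / (8P). -/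
/-!
With `g(x, φ) = 2 sin φ / k(x)`, the mirror equation `1/u + 1/v = 2 k(x) / sin φ` for
`u = a(z)`, `v = L(S z) - a(S z)` says `g = 4uv / (u + v) ≤ u + v` on `M`. Since `S` preserves `μ`
restricted to the invariant set `M`, the `a`-terms telescope and `∫_M g ≤ ∫_M L ≤ 2πA`. Off `M`
only `g ≤ 2 / k_min` is available, on a set of measure `2Pδ`. On the other hand
`∫ g dμ = π ∫₀ᴾ 1/k ≥ π P² / ∫₀ᴾ k = P² / 2` by Cauchy–Schwarz.
-/

open MeasureTheory Real Set
open scoped ENNReal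

namespace MeasureTheory.MeasurePreserving

variable {α : Type*} [MeasurableSpace α] {μ : Measure α} {S : α → α}

theorem preimage_ae_eq_of_mapsTo (hS : MeasurePreserving S μ μ) {M : Set α}
    (hM : MeasurableSet M) (hμM : μ M ≠ ∞) (hSM : MapsTo S M M) : S ⁻¹' M =ᵐ[μ] M := by
  have hpre : μ (S ⁻¹' M) = μ M := hS.measure_preimage hM.nullMeasurableSet
  exact (ae_eq_of_subset_of_measure_ge hSM hpre.le hM.nullMeasurableSet (hpre ▸ hμM)).symm

theorem restrict_of_mapsTo (hS : MeasurePreserving S μ μ) {M : Set α} (hM : MeasurableSet M)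
    (hμM : μ M ≠ ∞) (hSM : MapsTo S M M) :
    MeasurePreserving S (μ.restrict M) (μ.restrict M) := by
  simpa only [Measure.restrict_congr_set (hS.preimage_ae_eq_of_mapsTo hM hμM hSM)]
    using hS.restrict_preimage hM

theorem integral_comp_self {E : Type*} [NormedAddCommGroup E] [NormedSpace ℝ E]
    (hS : MeasurePreserving S μ μ) {f : α → E} (hf : AEStronglyMeasurable f μ) :
    ∫ x, f (S x) ∂μ = ∫ x, f x ∂μ := by
  rw [← integral_map hS.aemeasurable (by rwa [hS.map_eq]), hS.map_eq]

theorem integral_le_of_le_add_sub_comp (hS : MeasurePreserving S μ μ) {g L a : α → ℝ}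
    (hg : Integrable g μ) (hL : Integrable L μ) (ha : Integrable a μ)
    (hle : ∀ᵐ z ∂μ, g z ≤ a z + (L (S z) - a (S z))) : ∫ z, g z ∂μ ≤ ∫ z, L z ∂μ := by
  have hLS : Integrable (fun z => L (S z)) μ := hS.integrable_comp_of_integrable hL
  have haS : Integrable (fun z => a (S z)) μ := hS.integrable_comp_of_integrable ha
  have hdiff : Integrable (fun z => L (S z) - a (S z)) μ := hLS.sub haS
  calc ∫ z, g z ∂μ ≤ ∫ z, a z + (L (S z) - a (S z)) ∂μ :=
        integral_mono_ae hg (ha.add hdiff) hle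
    _ = ∫ z, L z ∂μ := by
        rw [integral_add ha hdiff, integral_sub hLS haS,
          hS.integral_comp_self hL.aestronglyMeasurable,
          hS.integral_comp_self ha.aestronglyMeasurable]
        ring

end MeasureTheory.MeasurePreserving

theorem two_mul_div_le_add_of_one_div_add_one_div_eq {u v k s : ℝ} (hu : 0 < u) (hv : 0 < v)
    (hk : 0 < k) (h : 1 / u + 1 / v = 2 * k / s) : 2 * s / k ≤ u + v := by
  have hs : 0 < s := by
    have : 0 < 2 * k / s := h ▸ by positivity
    exact (div_pos_iff_of_pos_left (by positivity)).mp this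
  have hcross : s * (u + v) = 2 * k * (u * v) := by
    field_simp at h
    linarith
  rw [div_le_iff₀ hk]
  nlinarith [sq_nonneg (u - v), mul_pos hu hv]

theorem sub_sq_div_integral_le_integral_inv {k : ℝ → ℝ} {a b : ℝ} (hab : a ≤ b)
    (hk : ∀ x ∈ Icc a b, 0 < k x) (hki : IntervalIntegrable k volume a b)
    (hkinv : IntervalIntegrable (fun x => (k x)⁻¹) volume a b)
    (hI : 0 < ∫ x in a..b, k x) :
    (b - a) ^ 2 / ∫ x in a..b, k x ≤ ∫ x in a..b, (k x)⁻¹ := by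
  set I := ∫ x in a..b, k x
  set c := (b - a) / I
  -- `2c - c²t ≤ 1/t` is `(1 - ct)² ≥ 0`; this `c` makes the integrated bound sharp.
  have htangent : ∀ x ∈ Icc a b, 2 * c - c ^ 2 * k x ≤ (k x)⁻¹ := fun x hx => by
    rw [← one_div, le_div_iff₀ (hk x hx)]
    nlinarith [sq_nonneg (1 - c * k x)]
  calc (b - a) ^ 2 / I = ∫ x in a..b, (2 * c - c ^ 2 * k x) := by
        rw [intervalIntegral.integral_sub intervalIntegrable_const (hki.const_mul _),
          intervalIntegral.integral_const, intervalIntegral.integral_const_mul]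
        simp only [smul_eq_mul, c]
        field_simp
        ring
    _ ≤ ∫ x in a..b, (k x)⁻¹ :=
        intervalIntegral.integral_mono_on hab (intervalIntegrable_const.sub (hki.const_mul _))
          hkinv htangent

noncomputable def billiardMeasure (Ω : Set (ℝ × ℝ)) : Measure (ℝ × ℝ) :=
  (volume.restrict Ω).withDensity fun z => ENNReal.ofReal (sin z.2)

def phaseSpace (P : ℝ) : Set (ℝ × ℝ) := Icc 0 P ×ˢ Ioo 0 π

theorem ae_mem_billiardMeasure {Ω : Set (ℝ × ℝ)} (hΩ : MeasurableSet Ω) :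
    ∀ᵐ z ∂billiardMeasure Ω, z ∈ Ω :=
  (withDensity_absolutelyContinuous _ _).ae_le (ae_restrict_mem hΩ)

theorem isFiniteMeasure_billiardMeasure {Ω : Set (ℝ × ℝ)} (hΩ : volume Ω ≠ ∞) :
    IsFiniteMeasure (billiardMeasure Ω) := by
  have : IsFiniteMeasure (volume.restrict Ω) := isFiniteMeasure_restrict.mpr hΩ
  have hsin : Integrable (fun z : ℝ × ℝ => sin z.2) (volume.restrict Ω) :=
    (integrable_const (1 : ℝ)).mono' measurable_snd.sin.aestronglyMeasurable
      (ae_of_all _ fun z => abs_sin_le_one z.2)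
  exact isFiniteMeasure_withDensity_ofReal hsin.hasFiniteIntegral

theorem integral_billiardMeasure_eq_setIntegral {Ω : Set (ℝ × ℝ)} (hΩ : MeasurableSet Ω)
    (hsin : ∀ z ∈ Ω, 0 ≤ sin z.2) (g : ℝ × ℝ → ℝ) :
    ∫ z, g z ∂billiardMeasure Ω = ∫ z in Ω, sin z.2 * g z := by
  rw [billiardMeasure, integral_withDensity_eq_integral_toReal_smul
    measurable_snd.sin.ennreal_ofReal (ae_of_all _ fun _ => ENNReal.ofReal_lt_top)]
  refine setIntegral_congr_fun hΩ fun z hz => ?_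
  simp only [ENNReal.toReal_ofReal (hsin z hz), smul_eq_mul]

section PhaseSpace

variable {P kmin : ℝ} {k : ℝ → ℝ}

theorem measurableSet_phaseSpace : MeasurableSet (phaseSpace P) :=
  measurableSet_Icc.prod measurableSet_Ioo

instance : IsFiniteMeasure (billiardMeasure (phaseSpace P)) := by
  refine isFiniteMeasure_billiardMeasure ?_
  rw [phaseSpace, Measure.volume_eq_prod, Measure.prod_prod, Real.volume_Icc, Real.volume_Ioo]
  exact ENNReal.mul_ne_top ENNReal.ofReal_ne_top ENNReal.ofReal_ne_top

theorem integral_sin_div_billiardMeasure :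
    ∫ z, 2 * sin z.2 / k z.1 ∂billiardMeasure (phaseSpace P) = π * ∫ x in Icc 0 P, (k x)⁻¹ := by
  have hsin : ∀ z ∈ phaseSpace P, 0 ≤ sin z.2 := fun z hz =>
    (sin_pos_of_pos_of_lt_pi hz.2.1 hz.2.2).le
  have hsin_sq : ∫ φ in Ioo 0 π, 2 * sin φ ^ 2 = π := by
    rw [← integral_Ioc_eq_integral_Ioo, ← intervalIntegral.integral_of_le pi_pos.le,
      intervalIntegral.integral_const_mul, integral_sin_sq]
    simp only [sin_zero, sin_pi, zero_mul, sub_zero]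
    ring
  calc ∫ z, 2 * sin z.2 / k z.1 ∂billiardMeasure (phaseSpace P)
      = ∫ z in Icc 0 P ×ˢ Ioo 0 π, (k z.1)⁻¹ * (2 * sin z.2 ^ 2) := by
        rw [integral_billiardMeasure_eq_setIntegral measurableSet_phaseSpace hsin]
        congr 1 with z
        ring
    _ = π * ∫ x in Icc 0 P, (k x)⁻¹ := by
        rw [Measure.volume_eq_prod,
          setIntegral_prod_mul (fun x => (k x)⁻¹) (fun φ => 2 * sin φ ^ 2), hsin_sq, mul_comm]

theorem abs_two_mul_sin_div_le (hkmin : 0 < kmin) {κ : ℝ} (hκ : kmin ≤ κ) (φ : ℝ) :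
    |2 * sin φ / κ| ≤ 2 / kmin := by
  have hκ0 : 0 < κ := hkmin.trans_le hκ
  rw [abs_div, abs_mul, abs_two, abs_of_pos hκ0]
  calc 2 * |sin φ| / κ ≤ 2 / κ := by gcongr; linarith [abs_sin_le_one φ]
    _ ≤ 2 / kmin := by gcongr

theorem half_sq_le_integral_sin_div (hP : 0 < P) (hkmin : 0 < kmin) (hk_meas : Measurable k)
    (hk : ∀ x ∈ Icc 0 P, kmin ≤ k x) (htot : ∫ x in 0..P, k x = 2 * π) :
    P ^ 2 / 2 ≤ ∫ z, 2 * sin z.2 / k z.1 ∂billiardMeasure (phaseSpace P) := by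
  have hk_int : IntervalIntegrable k volume 0 P :=
    intervalIntegral.intervalIntegrable_of_integral_ne_zero (by rw [htot]; positivity)
  have hk_inv_int : IntervalIntegrable (fun x => (k x)⁻¹) volume 0 P := by
    refine (intervalIntegrable_const (c := kmin⁻¹)).mono_fun' hk_meas.inv.aestronglyMeasurable ?_
    refine ae_restrict_of_forall_mem measurableSet_uIoc fun x hx => ?_
    rw [uIoc_of_le hP.le] at hx
    have hkx := hk x (Ioc_subset_Icc_self hx)
    show ‖(k x)⁻¹‖ ≤ kmin⁻¹
    rw [norm_inv, Real.norm_of_nonneg (hkmin.trans_le hkx).le]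
    exact inv_anti₀ hkmin hkx
  have hCS := sub_sq_div_integral_le_integral_inv hP.le (fun x hx => hkmin.trans_le (hk x hx))
    hk_int hk_inv_int (by rw [htot]; positivity)
  rw [integral_sin_div_billiardMeasure, integral_Icc_eq_integral_Ioc,
    ← intervalIntegral.integral_of_le hP.le]
  rw [htot, sub_zero] at hCS
  calc P ^ 2 / 2 = π * (P ^ 2 / (2 * π)) := by field_simp
    _ ≤ _ := by gcongr

theorem integrable_sin_div (hkmin : 0 < kmin) (hk_meas : Measurable k)
    (hk : ∀ x ∈ Icc 0 P, kmin ≤ k x) :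
    Integrable (fun z => 2 * sin z.2 / k z.1) (billiardMeasure (phaseSpace P)) := by
  refine (integrable_const (2 / kmin)).mono'
    (by fun_prop : Measurable fun z : ℝ × ℝ => 2 * sin z.2 / k z.1).aestronglyMeasurable ?_
  filter_upwards [ae_mem_billiardMeasure measurableSet_phaseSpace] with z hz
  exact abs_two_mul_sin_div_le hkmin (hk z.1 hz.1) z.2

theorem setIntegral_sin_div_le_mul_measureReal (hkmin : 0 < kmin) (hk : ∀ x ∈ Icc 0 P, kmin ≤ k x)
    {s : Set (ℝ × ℝ)} (hs : s ⊆ phaseSpace P) :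
    ∫ z in s, 2 * sin z.2 / k z.1 ∂billiardMeasure (phaseSpace P)
      ≤ 2 / kmin * (billiardMeasure (phaseSpace P)).real s :=
  (Real.le_norm_self _).trans <| norm_setIntegral_le_of_norm_le_const (measure_lt_top _ _)
    fun z hz => abs_two_mul_sin_div_le hkmin (hk z.1 (hs hz).1) z.2

end PhaseSpace

theorem setIntegral_sin_div_le_setIntegral_of_mirror {μ : Measure (ℝ × ℝ)}
    {S : ℝ × ℝ → ℝ × ℝ} (hS : MeasurePreserving S μ μ) {M : Set (ℝ × ℝ)} (hM : MeasurableSet M)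
    (hμM : μ M ≠ ∞) (hSM : MapsTo S M M) {k : ℝ → ℝ} {L a : ℝ × ℝ → ℝ} (hL : Integrable L μ)
    (ha_meas : Measurable a) (hg : IntegrableOn (fun z => 2 * sin z.2 / k z.1) M μ)
    (hk : ∀ z ∈ M, 0 < k z.1) (ha : ∀ z ∈ M, 0 < a z ∧ a z < L z)
    (hmirror : ∀ z ∈ M, 1 / a z + 1 / (L (S z) - a (S z)) = 2 * k z.1 / sin z.2) :
    ∫ z in M, 2 * sin z.2 / k z.1 ∂μ ≤ ∫ z in M, L z ∂μ := by
  have ha_int : IntegrableOn a M μ := by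
    refine hL.integrableOn.mono' ha_meas.aestronglyMeasurable (ae_restrict_of_forall_mem hM ?_)
    intro z hz
    rw [Real.norm_of_nonneg (ha z hz).1.le]
    exact (ha z hz).2.le
  refine (hS.restrict_of_mapsTo hM hμM hSM).integral_le_of_le_add_sub_comp hg hL.integrableOn
    ha_int (ae_restrict_of_forall_mem hM fun z hz => ?_)
  exact two_mul_div_le_add_of_one_div_add_one_div_eq (ha z hz).1 (sub_pos.2 (ha _ (hSM hz)).2)
    (hk z hz) (hmirror z hz)

theorem planar_billiard_bound_via_mirror_equation_general
    (P A kmin : ℝ) (hP : 0 < P) (hA : 0 < A) (hkmin : 0 < kmin)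
    (Ω : Set (ℝ × ℝ)) (hΩ : Ω = Icc (0 : ℝ) P ×ˢ Ioo (0 : ℝ) π)
    (μ : Measure (ℝ × ℝ))
    (hμ : μ = (volume.restrict Ω).withDensity fun z => ENNReal.ofReal (Real.sin z.2))
    (T S : ℝ × ℝ → ℝ × ℝ)
    (hST : ∀ z ∈ Ω, S (T z) = z)
    (hSμ : MeasurePreserving S μ μ)
    (M : Set (ℝ × ℝ)) (hMmeas : MeasurableSet M) (hMΩ : M ⊆ Ω) (hTM : T '' M = M)
    (δ : ℝ) (hδ0 : 0 ≤ δ) (hδ : μ (Ω \ M) = ENNReal.ofReal (2 * P * δ))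
    (k : ℝ → ℝ) (hkmeas : Measurable k) (hkge : ∀ x ∈ Icc (0 : ℝ) P, kmin ≤ k x)
    (hktot : ∫ x in (0 : ℝ)..P, k x = 2 * π)
    (L : ℝ × ℝ → ℝ) (hLnonneg : ∀ z, 0 ≤ L z)
    (hSantalo : ∫ z, L z ∂μ = 2 * π * A)
    (a : ℝ × ℝ → ℝ) (hameas : Measurable a)
    (ha : ∀ z ∈ M, 0 < a z ∧ a z < L z)
    (hmirror : ∀ z ∈ M,
      1 / a z + 1 / (L (S z) - a (S z)) = 2 * k z.1 / Real.sin z.2) :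
    δ ≥ (P ^ 2 - 4 * π * A) * kmin / (8 * P) := by
  obtain rfl : Ω = phaseSpace P := hΩ
  obtain rfl : μ = billiardMeasure (phaseSpace P) := hμ
  have hSM : MapsTo S M M := LeftInvOn.mapsTo (fun w hw => hST w (hMΩ hw)) hTM.symm.subset
  have hg := integrable_sin_div hkmin hkmeas hkge
  have hL : Integrable L (billiardMeasure (phaseSpace P)) :=
    .of_integral_ne_zero (by rw [hSantalo]; positivity)
  have hon := setIntegral_sin_div_le_setIntegral_of_mirror hSμ hMmeas (measure_ne_top _ _) hSM hL
    hameas hg.integrableOn (fun z hz => hkmin.trans_le (hkge z.1 (hMΩ hz).1)) ha hmirror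
  have hoff := setIntegral_sin_div_le_mul_measureReal hkmin hkge (sdiff_subset (t := M))
  rw [measureReal_def, hδ, ENNReal.toReal_ofReal (by positivity)] at hoff
  have hsplit := integral_inter_add_sdiff (s := phaseSpace P) hMmeas hg.integrableOn
  rw [inter_eq_right.2 hMΩ,
    Measure.restrict_eq_self_of_ae_mem (ae_mem_billiardMeasure measurableSet_phaseSpace)] at hsplit
  have hLM : ∫ z in M, L z ∂billiardMeasure (phaseSpace P) ≤ 2 * π * A :=
    hSantalo ▸ setIntegral_le_integral hL (ae_of_all _ hLnonneg)
  have hlow := half_sq_le_integral_sin_div hP hkmin hkmeas hkge hktot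
  have hbound : P ^ 2 / 2 - 2 * π * A ≤ 4 * P * δ / kmin := by
    have : 2 / kmin * (2 * P * δ) = 4 * P * δ / kmin := by ring
    linarith
  rw [le_div_iff₀ hkmin] at hbound
  rw [ge_iff_le, div_le_iff₀ (by positivity)]
  linarith

/-- **Effective Hopf rigidity for planar billiards via the mirror equation, bound (1.3).**
Billiard setup: `Ω = [0,P] × (0,π)`, `μ` has density `sin φ` w.r.t. Lebesgue measure,
`T` is a measurable bijection of `Ω` with measurable inverse `S = T⁻¹`, both preserving `μ`,
`M ⊆ Ω` is measurable and `T`-invariant, and `μ(Ω \ M) = 2Pδ`.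
The mirror equation `1/a(z) + 1/(L(T⁻¹z) - a(T⁻¹z)) = 2k(x)/sin φ` holds on `M`. -/
theorem planar_billiard_bound_via_mirror_equation
    (P A kmin : ℝ) (hP : 0 < P) (hA : 0 < A) (hkmin : 0 < kmin)
    (Ω : Set (ℝ × ℝ)) (hΩ : Ω = Icc (0 : ℝ) P ×ˢ Ioo (0 : ℝ) π)
    (μ : Measure (ℝ × ℝ))
    (hμ : μ = (volume.restrict Ω).withDensity fun z => ENNReal.ofReal (Real.sin z.2))
    (T S : ℝ × ℝ → ℝ × ℝ) (hTmeas : Measurable T) (hSmeas : Measurable S)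
    (hTΩ : MapsTo T Ω Ω) (hSΩ : MapsTo S Ω Ω)
    (hST : ∀ z ∈ Ω, S (T z) = z) (hTS : ∀ z ∈ Ω, T (S z) = z)
    (hTμ : MeasurePreserving T μ μ) (hSμ : MeasurePreserving S μ μ)
    (M : Set (ℝ × ℝ)) (hMmeas : MeasurableSet M) (hMΩ : M ⊆ Ω) (hTM : T '' M = M)
    (δ : ℝ) (hδ0 : 0 ≤ δ) (hδ : μ (Ω \ M) = ENNReal.ofReal (2 * P * δ))
    (k : ℝ → ℝ) (hkmeas : Measurable k) (hkge : ∀ x ∈ Icc (0 : ℝ) P, kmin ≤ k x)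
    (hktot : ∫ x in (0 : ℝ)..P, k x = 2 * π)
    (L : ℝ × ℝ → ℝ) (hLmeas : Measurable L) (hLnonneg : ∀ z, 0 ≤ L z)
    (hSantalo : ∫ z, L z ∂μ = 2 * π * A)
    (a : ℝ × ℝ → ℝ) (hameas : Measurable a)
    (ha : ∀ z ∈ M, 0 < a z ∧ a z < L z)
    (hmirror : ∀ z ∈ M,
      1 / a z + 1 / (L (S z) - a (S z)) = 2 * k z.1 / Real.sin z.2) :
    δ ≥ (P ^ 2 - 4 * π * A) * kmin / (8 * P) :=
  planar_billiard_bound_via_mirror_equation_general P A kmin hP hA hkmin Ω hΩ μ hμ T S hST hSμ M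
    hMmeas hMΩ hTM δ hδ0 hδ k hkmeas hkge hktot L hLnonneg hSantalo a hameas ha hmirror
end

section
/- Let f, ψ, K, Ω, μ, Vol be as in the two-dimensional conformal torus setup, let M ⊆ Ω be measurable, set δ := μ(Ω \ M) / (2π·Vol), and let ω : Ω → ℝ be measurable such that the functions (x,φ) ↦ ψ(f(x))·ω(x,φ)² and (x,φ) ↦ ψ'(f(x))·((∂₁f(x)·cos φ + ∂₂f(x)·sin φ)/√(f(x)))·ω(x,φ) are μ-integrable on M and satisfy ∫_M [ −ψ'(f(x))·((∂₁f(x)·cos φ + ∂₂f(x)·sin φ)/√(f(x)))·ω + ψ(f(x))·ω² + ψ(f(x))·K(x) ] dμ ≤ 0. Then 8·‖K‖_∞·‖ψ∘f‖_∞·Vol·δ ≥ ∫_{[0,1]²} Ψ(f(x))·|∇f(x)|² dx, where Ψ(t) := ψ'(t)·(4/t − ψ'(t)/ψ(t)). -/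
open MeasureTheory Real Set

/-- First partial derivative of a function on `ℝ²`. -/
noncomputable def pd1 (g : ℝ × ℝ → ℝ) (x : ℝ × ℝ) : ℝ := fderiv ℝ g x (1, 0)

/-- Second partial derivative of a function on `ℝ²`. -/
noncomputable def pd2 (g : ℝ × ℝ → ℝ) (x : ℝ × ℝ) : ℝ := fderiv ℝ g x (0, 1)

/-- The Euclidean Laplacian of a function on `ℝ²`. -/
noncomputable def lap2 (g : ℝ × ℝ → ℝ) (x : ℝ × ℝ) : ℝ :=
  pd1 (pd1 g) x + pd2 (pd2 g) x

lemma pd1_contDiff {n : ℕ} {g : ℝ × ℝ → ℝ} (hg : ContDiff ℝ (n+1) g) :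
    ContDiff ℝ n (pd1 g) := by
  have := hg.fderiv_right (m := n) (by exact_mod_cast le_refl _)
  exact this.clm_apply contDiff_const

lemma pd2_contDiff {n : ℕ} {g : ℝ × ℝ → ℝ} (hg : ContDiff ℝ (n+1) g) :
    ContDiff ℝ n (pd2 g) := by
  have := hg.fderiv_right (m := n) (by exact_mod_cast le_refl _)
  exact this.clm_apply contDiff_const

lemma pd1_comp {φ : ℝ → ℝ} {g : ℝ × ℝ → ℝ} {x : ℝ × ℝ} {d : ℝ}
    (hφ : HasDerivAt φ d (g x)) (hg : DifferentiableAt ℝ g x) :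
    pd1 (fun y => φ (g y)) x = d * pd1 g x := by
  have h := (hφ.comp_hasFDerivAt x hg.hasFDerivAt).fderiv
  simp only [pd1]
  rw [show (fun y => φ (g y)) = φ ∘ g from rfl, h]; rfl

lemma pd2_comp {φ : ℝ → ℝ} {g : ℝ × ℝ → ℝ} {x : ℝ × ℝ} {d : ℝ}
    (hφ : HasDerivAt φ d (g x)) (hg : DifferentiableAt ℝ g x) :
    pd2 (fun y => φ (g y)) x = d * pd2 g x := by
  have h := (hφ.comp_hasFDerivAt x hg.hasFDerivAt).fderiv
  simp only [pd2]
  rw [show (fun y => φ (g y)) = φ ∘ g from rfl, h]; rfl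

lemma pd1_mul {a b : ℝ × ℝ → ℝ} {x : ℝ × ℝ} (ha : DifferentiableAt ℝ a x)
    (hb : DifferentiableAt ℝ b x) :
    pd1 (fun y => a y * b y) x = pd1 a x * b x + a x * pd1 b x := by
  simp only [pd1, fderiv_fun_mul ha hb]; simp; ring

lemma pd2_mul {a b : ℝ × ℝ → ℝ} {x : ℝ × ℝ} (ha : DifferentiableAt ℝ a x)
    (hb : DifferentiableAt ℝ b x) :
    pd2 (fun y => a y * b y) x = pd2 a x * b x + a x * pd2 b x := by
  simp only [pd2, fderiv_fun_mul ha hb]; simp; ring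

lemma fderiv_per {g : ℝ × ℝ → ℝ} (c : ℝ × ℝ) (hg : ∀ y, g (y + c) = g y)
    (hd : Differentiable ℝ g) (x : ℝ × ℝ) : fderiv ℝ g (x + c) = fderiv ℝ g x := by
  have hT : HasFDerivAt (fun y : ℝ × ℝ => y + c) (ContinuousLinearMap.id ℝ (ℝ × ℝ)) x :=
    (hasFDerivAt_id x).add_const c
  have h2 : HasFDerivAt (g ∘ fun y => y + c)
      ((fderiv ℝ g (x + c)).comp (ContinuousLinearMap.id ℝ (ℝ × ℝ))) x :=
    HasFDerivAt.comp x (hd (x + c)).hasFDerivAt hT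
  have h3 : (g ∘ fun y : ℝ × ℝ => y + c) = g := funext fun y => hg y
  rw [h3, ContinuousLinearMap.comp_id] at h2
  rw [← h2.fderiv]

lemma pd1_per {g : ℝ × ℝ → ℝ} (c : ℝ × ℝ) (hg : ∀ y, g (y + c) = g y)
    (hd : Differentiable ℝ g) (x : ℝ × ℝ) : pd1 g (x + c) = pd1 g x := by
  simp only [pd1, fderiv_per c hg hd x]

lemma pd2_per {g : ℝ × ℝ → ℝ} (c : ℝ × ℝ) (hg : ∀ y, g (y + c) = g y)
    (hd : Differentiable ℝ g) (x : ℝ × ℝ) : pd2 g (x + c) = pd2 g x := by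
  simp only [pd2, fderiv_per c hg hd x]

/-- Integration by parts on the torus. -/
lemma torus_ibp (f : ℝ × ℝ → ℝ) (hf : ContDiff ℝ (⊤ : ℕ∞) f) (hfpos : ∀ x, 0 < f x)
    (hfper : ∀ (x : ℝ × ℝ) (m n : ℤ), f (x.1 + m, x.2 + n) = f x)
    (ψ : ℝ → ℝ) (hψ : ContDiffOn ℝ (⊤ : ℕ∞) ψ (Ioi (0 : ℝ))) :
    ∫ x in Icc (0 : ℝ × ℝ) 1,
      (deriv ψ (f x) * ((pd1 f x) ^ 2 + (pd2 f x) ^ 2) / f x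
        + ψ (f x) * lap2 (fun y => Real.log (f y)) x) = 0 := by
  have hf3 : ContDiff ℝ 3 f := hf.of_le (WithTop.coe_le_coe.2 (le_top : (3:ℕ∞) ≤ ⊤))
  set L : ℝ × ℝ → ℝ := fun y => Real.log (f y) with hLdef
  have hL : ContDiff ℝ 3 L := hf3.log (fun x => (hfpos x).ne')
  have hL2 : ContDiff ℝ 2 L := hL.of_le (by norm_num)
  have hu1 : ContDiff ℝ 2 (pd1 L) := pd1_contDiff hL
  have hu2 : ContDiff ℝ 2 (pd2 L) := pd2_contDiff hL
  have hψd : ∀ t : ℝ, 0 < t → HasDerivAt ψ (deriv ψ t) t := fun t ht =>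
    ((hψ.contDiffAt (Ioi_mem_nhds ht)).differentiableAt (by simp)).hasDerivAt
  -- Φ = ψ ∘ f differentiable
  have hΦd : ∀ x, HasFDerivAt (fun y => ψ (f y)) 
      (deriv ψ (f x) • fderiv ℝ f x) x := fun x =>
    (hψd (f x) (hfpos x)).comp_hasFDerivAt x (hf.differentiable (by simp) x).hasFDerivAt
  have hΦdiff : Differentiable ℝ (fun y => ψ (f y)) := fun x => (hΦd x).differentiableAt
  have hΦc : Continuous (fun y => ψ (f y)) := hΦdiff.continuous
  have hdc : Continuous (fun x => deriv ψ (f x)) := by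
    have h1 : ContDiffOn ℝ 2 (derivWithin ψ (Ioi 0)) (Ioi 0) :=
      hψ.derivWithin (isOpen_Ioi.uniqueDiffOn) (WithTop.coe_le_coe.2 le_top)
    have h3 : Continuous fun x => derivWithin ψ (Ioi 0) (f x) :=
      h1.continuousOn.comp_continuous hf.continuous (fun x => hfpos x)
    convert h3 using 2 with x
    exact (derivWithin_of_isOpen isOpen_Ioi (hfpos x)).symm
  -- the vector field
  set F1 : ℝ × ℝ → ℝ := fun x => ψ (f x) * pd1 L x with hF1def
  set F2 : ℝ × ℝ → ℝ := fun x => ψ (f x) * pd2 L x with hF2def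
  have hF1diff : Differentiable ℝ F1 :=
    hΦdiff.mul (hu1.differentiable (by norm_num))
  have hF2diff : Differentiable ℝ F2 :=
    hΦdiff.mul (hu2.differentiable (by norm_num))
  -- periodicity
  have hper1 : ∀ p : ℝ × ℝ, f (p + (1, 0)) = f p := by
    intro p
    have := hfper p 1 0
    rw [show p + ((1 : ℝ), (0 : ℝ)) = (p.1 + 1, p.2 + 0) from rfl]
    simpa using this
  have hper2 : ∀ p : ℝ × ℝ, f (p + (0, 1)) = f p := by
    intro p
    have := hfper p 0 1
    rw [show p + ((0 : ℝ), (1 : ℝ)) = (p.1 + 0, p.2 + 1) from rfl]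
    simpa using this
  have hLper1 : ∀ p : ℝ × ℝ, L (p + (1, 0)) = L p := fun p => by
    simp only [hLdef, hper1 p]
  have hLper2 : ∀ p : ℝ × ℝ, L (p + (0, 1)) = L p := fun p => by
    simp only [hLdef, hper2 p]
  have hLd : Differentiable ℝ L := hL.differentiable (by norm_num)
  have hF1per : ∀ p : ℝ × ℝ, F1 (p + (1, 0)) = F1 p := fun p => by
    simp only [hF1def, hper1 p, pd1_per _ hLper1 hLd p]
  have hF2per : ∀ p : ℝ × ℝ, F2 (p + (0, 1)) = F2 p := fun p => by
    simp only [hF2def, hper2 p, pd2_per _ hLper2 hLd p]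
  -- divergence identity
  have hdiv : ∀ x : ℝ × ℝ, fderiv ℝ F1 x (1, 0) + fderiv ℝ F2 x (0, 1)
      = deriv ψ (f x) * ((pd1 f x) ^ 2 + (pd2 f x) ^ 2) / f x + ψ (f x) * lap2 L x := by
    intro x
    have hfd : DifferentiableAt ℝ f x := hf.differentiable (by simp) x
    have e1 : fderiv ℝ F1 x (1, 0) = pd1 F1 x := rfl
    have e2 : fderiv ℝ F2 x (0, 1) = pd2 F2 x := rfl
    have p1 : pd1 F1 x = pd1 (fun y => ψ (f y)) x * pd1 L x + ψ (f x) * pd1 (pd1 L) x :=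
      pd1_mul (hΦdiff x) (hu1.differentiable (by norm_num) x)
    have p2 : pd2 F2 x = pd2 (fun y => ψ (f y)) x * pd2 L x + ψ (f x) * pd2 (pd2 L) x :=
      pd2_mul (hΦdiff x) (hu2.differentiable (by norm_num) x)
    have q1 : pd1 (fun y => ψ (f y)) x = deriv ψ (f x) * pd1 f x :=
      pd1_comp (hψd (f x) (hfpos x)) hfd
    have q2 : pd2 (fun y => ψ (f y)) x = deriv ψ (f x) * pd2 f x :=
      pd2_comp (hψd (f x) (hfpos x)) hfd
    have r1 : pd1 L x = (f x)⁻¹ * pd1 f x :=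
      pd1_comp (Real.hasDerivAt_log (hfpos x).ne') hfd
    have r2 : pd2 L x = (f x)⁻¹ * pd2 f x :=
      pd2_comp (Real.hasDerivAt_log (hfpos x).ne') hfd
    rw [e1, e2, p1, p2, q1, q2, r1, r2, lap2]
    have : f x ≠ 0 := (hfpos x).ne'
    field_simp
    ring
  -- continuity of the divergence
  have hpd1c : Continuous (pd1 f) := (pd1_contDiff (hf.of_le (WithTop.coe_le_coe.2 le_top) : ContDiff ℝ (1+1) f)).continuous
  have hpd2c : Continuous (pd2 f) := (pd2_contDiff (hf.of_le (WithTop.coe_le_coe.2 le_top) : ContDiff ℝ (1+1) f)).continuous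
  have hlapc : Continuous (lap2 L) := by
    have c1 : Continuous (pd1 (pd1 L)) := (pd1_contDiff (hu1.of_le (by norm_num) : ContDiff ℝ (1+1) (pd1 L))).continuous
    have c2 : Continuous (pd2 (pd2 L)) := (pd2_contDiff (hu2.of_le (by norm_num) : ContDiff ℝ (1+1) (pd2 L))).continuous
    exact c1.add c2
  have hdivc : Continuous (fun x => deriv ψ (f x) * ((pd1 f x) ^ 2 + (pd2 f x) ^ 2) / f x
      + ψ (f x) * lap2 L x) := by
    apply Continuous.add
    · exact (hdc.mul ((hpd1c.pow 2).add (hpd2c.pow 2))).div hf.continuous (fun x => (hfpos x).ne')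
    · exact hΦc.mul hlapc
  -- apply the divergence theorem
  have hle : (0 : ℝ × ℝ) ≤ 1 := by constructor <;> norm_num
  have key := integral_divergence_prod_Icc_of_hasFDerivAt_off_countable_of_le
    F1 F2 (fun x => fderiv ℝ F1 x) (fun x => fderiv ℝ F2 x) 0 1 hle ∅ countable_empty
    (hF1diff.continuous.continuousOn) (hF2diff.continuous.continuousOn)
    (fun x _ => (hF1diff x).hasFDerivAt) (fun x _ => (hF2diff x).hasFDerivAt)
    (by
      apply (ContinuousOn.integrableOn_compact isCompact_Icc)
      exact (hdivc.congr (fun x => (hdiv x).symm)).continuousOn)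
  rw [setIntegral_congr_fun measurableSet_Icc (fun x _ => hdiv x)] at key
  rw [key]
  have b1 : ∀ y : ℝ, F1 (1, y) = F1 (0, y) := by
    intro y
    have := hF1per (0, y)
    rw [show ((0 : ℝ), y) + ((1 : ℝ), (0 : ℝ)) = ((1 : ℝ), y + 0) by rw [Prod.mk_add_mk]; norm_num] at this
    simpa using this
  have b2 : ∀ x : ℝ, F2 (x, 1) = F2 (x, 0) := by
    intro x
    have := hF2per (x, 0)
    rw [show (x, (0 : ℝ)) + ((0 : ℝ), (1 : ℝ)) = (x + 0, (1 : ℝ)) by rw [Prod.mk_add_mk]; norm_num] at this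
    simpa using this
  simp only [Prod.fst_zero, Prod.snd_zero, Prod.fst_one, Prod.snd_one]
  rw [intervalIntegral.integral_congr (g := fun y => F1 (0, y)) (fun y _ => b1 y),
    intervalIntegral.integral_congr (g := fun x => F2 (x, 0)) (fun x _ => b2 x)]
  ring

lemma trig_integral (a b : ℝ) :
    ∫ φ in Ico (0 : ℝ) (2 * π), (a * Real.cos φ + b * Real.sin φ) ^ 2 = π * (a ^ 2 + b ^ 2) := by
  rw [setIntegral_congr_set Ico_ae_eq_Ioc,
    ← intervalIntegral.integral_of_le (by positivity : (0:ℝ) ≤ 2 * π)]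
  have expand : ∀ φ : ℝ, (a * Real.cos φ + b * Real.sin φ) ^ 2
      = a ^ 2 * Real.cos φ ^ 2 + b ^ 2 * Real.sin φ ^ 2
        + (2 * a * b) * (Real.sin φ * Real.cos φ) := by intro φ; ring
  rw [intervalIntegral.integral_congr (fun φ _ => expand φ)]
  have i1 : IntervalIntegrable (fun φ => a ^ 2 * Real.cos φ ^ 2) volume 0 (2*π) :=
    (Continuous.intervalIntegrable (by continuity) _ _)
  have i2 : IntervalIntegrable (fun φ => b ^ 2 * Real.sin φ ^ 2) volume 0 (2*π) :=
    (Continuous.intervalIntegrable (by continuity) _ _)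
  have i3 : IntervalIntegrable (fun φ => (2 * a * b) * (Real.sin φ * Real.cos φ)) volume 0 (2*π) :=
    (Continuous.intervalIntegrable (by continuity) _ _)
  rw [intervalIntegral.integral_add (i1.add i2) i3, intervalIntegral.integral_add i1 i2,
    intervalIntegral.integral_const_mul, intervalIntegral.integral_const_mul,
    intervalIntegral.integral_const_mul, integral_cos_sq, integral_sin_sq,
    integral_sin_mul_cos₁]
  simp [Real.cos_two_pi, Real.sin_two_pi]
  ring

section MeasureAux
variable {f : ℝ × ℝ → ℝ} {Ω S : Set ((ℝ × ℝ) × ℝ)}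

lemma dens_meas (hfc : Continuous f) :
    Measurable fun z : (ℝ × ℝ) × ℝ => Real.toNNReal (f z.1) :=
  (continuous_real_toNNReal.comp (hfc.comp continuous_fst)).measurable

lemma ofReal_eq_nn : (fun z : (ℝ × ℝ) × ℝ => ENNReal.ofReal (f z.1))
    = fun z => ((Real.toNNReal (f z.1) : NNReal) : ENNReal) := rfl

lemma mu_restrict_eq (hS : S ⊆ Ω) (hSm : MeasurableSet S) :
    (((volume.restrict Ω).withDensity fun z => ENNReal.ofReal (f z.1)).restrict S)
      = (volume.restrict S).withDensity fun z => ENNReal.ofReal (f z.1) := by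
  rw [restrict_withDensity hSm, Measure.restrict_restrict hSm,
    inter_eq_self_of_subset_left hS]

lemma mu_setIntegral (hfc : Continuous f) (hfnn : ∀ x, 0 ≤ f x)
    (hS : S ⊆ Ω) (hSm : MeasurableSet S) (u : (ℝ × ℝ) × ℝ → ℝ) :
    ∫ z in S, u z ∂((volume.restrict Ω).withDensity fun z => ENNReal.ofReal (f z.1))
      = ∫ z in S, f z.1 * u z := by
  rw [show (∫ z in S, u z ∂((volume.restrict Ω).withDensity fun z => ENNReal.ofReal (f z.1)))
      = ∫ z, u z ∂(((volume.restrict Ω).withDensity fun z => ENNReal.ofReal (f z.1)).restrict S)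
      from rfl,
    mu_restrict_eq hS hSm, ofReal_eq_nn,
    integral_withDensity_eq_integral_smul (dens_meas hfc) u]
  apply integral_congr_ae
  filter_upwards with z
  rw [NNReal.smul_def, Real.coe_toNNReal _ (hfnn z.1), smul_eq_mul]

lemma mu_integrableOn (hfc : Continuous f) (hfnn : ∀ x, 0 ≤ f x)
    (hS : S ⊆ Ω) (hSm : MeasurableSet S) (u : (ℝ × ℝ) × ℝ → ℝ) :
    IntegrableOn u S ((volume.restrict Ω).withDensity fun z => ENNReal.ofReal (f z.1))
      ↔ IntegrableOn (fun z => f z.1 * u z) S volume := by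
  rw [IntegrableOn, mu_restrict_eq hS hSm, ofReal_eq_nn,
    integrable_withDensity_iff_integrable_smul (dens_meas hfc)]
  constructor <;> intro h <;> refine h.congr ?_ <;> filter_upwards with z <;>
    rw [NNReal.smul_def, Real.coe_toNNReal _ (hfnn z.1), smul_eq_mul]

lemma mu_measure_eq (hfc : Continuous f) (hfnn : ∀ x, 0 ≤ f x)
    (hS : S ⊆ Ω) (hSm : MeasurableSet S)
    (hi : IntegrableOn (fun z => f z.1) S volume) :
    (((volume.restrict Ω).withDensity fun z => ENNReal.ofReal (f z.1)) S).toReal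
      = ∫ z in S, f z.1 := by
  have h1 : ((volume.restrict Ω).withDensity fun z => ENNReal.ofReal (f z.1)) S
      = ∫⁻ z in S, ENNReal.ofReal (f z.1) ∂volume := by
    rw [withDensity_apply _ hSm, Measure.restrict_restrict hSm,
      inter_eq_self_of_subset_left hS]
  rw [h1, ← ofReal_integral_eq_lintegral_ofReal hi
    (Filter.Eventually.of_forall fun z => hfnn z.1),
    ]
  exact ENNReal.toReal_ofReal (setIntegral_nonneg hSm fun z _ => hfnn z.1)
end MeasureAux

section FubiniAux

lemma square_ae_eq :
    (Ico (0 : ℝ) 1 ×ˢ Ico (0 : ℝ) 1 : Set (ℝ × ℝ)) =ᵐ[volume] Icc (0 : ℝ × ℝ) 1 := by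
  rw [Icc_prod_eq]
  simp only [Prod.fst_zero, Prod.snd_zero, Prod.fst_one, Prod.snd_one]
  rw [Measure.volume_eq_prod]
  exact Measure.set_prod_ae_eq Ico_ae_eq_Icc Ico_ae_eq_Icc

lemma fubini_omega (u : (ℝ × ℝ) × ℝ → ℝ) (hu : Continuous u) :
    ∫ z in (Ico (0 : ℝ) 1 ×ˢ Ico (0 : ℝ) 1) ×ˢ Ico (0 : ℝ) (2 * π), u z
      = ∫ x in Ico (0 : ℝ) 1 ×ˢ Ico (0 : ℝ) 1, ∫ φ in Ico (0 : ℝ) (2 * π), u (x, φ) := by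
  have hint : IntegrableOn u ((Ico (0 : ℝ) 1 ×ˢ Ico (0 : ℝ) 1) ×ˢ Ico (0 : ℝ) (2 * π))
      ((volume : Measure (ℝ × ℝ)).prod (volume : Measure ℝ)) := by
    rw [← Measure.volume_eq_prod]
    refine IntegrableOn.mono_set (t := (Icc (0:ℝ) 1 ×ˢ Icc (0:ℝ) 1) ×ˢ Icc (0:ℝ) (2 * π))
      (hu.continuousOn.integrableOn_compact
        ((isCompact_Icc.prod isCompact_Icc).prod isCompact_Icc))
      (prod_mono (prod_mono Ico_subset_Icc_self Ico_subset_Icc_self) Ico_subset_Icc_self)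
  rw [Measure.volume_eq_prod]
  exact setIntegral_prod u hint

lemma integrableOn_box (u : (ℝ × ℝ) × ℝ → ℝ) (hu : Continuous u) :
    IntegrableOn u ((Ico (0 : ℝ) 1 ×ˢ Ico (0 : ℝ) 1) ×ˢ Ico (0 : ℝ) (2 * π)) volume := by
  exact IntegrableOn.mono_set (t := (Icc (0:ℝ) 1 ×ˢ Icc (0:ℝ) 1) ×ˢ Icc (0:ℝ) (2 * π))
    (hu.continuousOn.integrableOn_compact
      ((isCompact_Icc.prod isCompact_Icc).prod isCompact_Icc))
    (prod_mono (prod_mono Ico_subset_Icc_self Ico_subset_Icc_self) Ico_subset_Icc_self)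

end FubiniAux

set_option maxHeartbeats 2000000 in
/-- **Effective Hopf rigidity for conformally flat 2-tori (Theorem 1.2, part 1).**
`f` is smooth, `ℤ²`-periodic and positive; `ψ` is smooth and positive on `(0,∞)`;
`K = −Δ(log f)/(2f)` is the Gaussian curvature of `g = f·(dx₁²+dx₂²)`;
`Ω = [0,1)² × [0,2π)` carries the measure with density `f(x)`;
`Vol = ∫_{[0,1]²} f`; `δ = μ(Ω \ M)/(2π·Vol)`; the integral hypothesis is the
integrated Riccati equation over the invariant set `M` of minimal orbits. -/
theorem conformal_torus_two_dim_bound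
    (f : ℝ × ℝ → ℝ) (hf : ContDiff ℝ (⊤ : ℕ∞) f) (hfpos : ∀ x, 0 < f x)
    (hfper : ∀ (x : ℝ × ℝ) (m n : ℤ), f (x.1 + m, x.2 + n) = f x)
    (ψ : ℝ → ℝ) (hψ : ContDiffOn ℝ (⊤ : ℕ∞) ψ (Ioi (0 : ℝ)))
    (hψpos : ∀ t > (0 : ℝ), 0 < ψ t)
    (K : ℝ × ℝ → ℝ)
    (hK : ∀ x, K x = -(lap2 (fun y => Real.log (f y)) x) / (2 * f x))
    (Ω : Set ((ℝ × ℝ) × ℝ))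
    (hΩ : Ω = (Ico (0 : ℝ) 1 ×ˢ Ico (0 : ℝ) 1) ×ˢ Ico (0 : ℝ) (2 * π))
    (μ : Measure ((ℝ × ℝ) × ℝ))
    (hμ : μ = (volume.restrict Ω).withDensity fun z => ENNReal.ofReal (f z.1))
    (Vol : ℝ) (hVol : Vol = ∫ x in Icc (0 : ℝ × ℝ) 1, f x)
    (M : Set ((ℝ × ℝ) × ℝ)) (hMmeas : MeasurableSet M) (hMΩ : M ⊆ Ω)
    (δ : ℝ) (hδ : δ = (μ (Ω \ M)).toReal / (2 * π * Vol))
    (ω : (ℝ × ℝ) × ℝ → ℝ) (hωmeas : Measurable ω)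
    (hint1 : IntegrableOn (fun z => ψ (f z.1) * ω z ^ 2) M μ)
    (hint2 : IntegrableOn (fun z =>
      deriv ψ (f z.1) *
        ((pd1 f z.1 * Real.cos z.2 + pd2 f z.1 * Real.sin z.2) /
          Real.sqrt (f z.1)) * ω z) M μ)
    (heq : ∫ z in M,
        (-(deriv ψ (f z.1) *
            ((pd1 f z.1 * Real.cos z.2 + pd2 f z.1 * Real.sin z.2) /
              Real.sqrt (f z.1)) * ω z)
          + ψ (f z.1) * ω z ^ 2 + ψ (f z.1) * K z.1) ∂μ ≤ 0) :
    8 * (sSup ((fun x => |K x|) '' Icc (0 : ℝ × ℝ) 1)) *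
        (sSup ((fun x => |ψ (f x)|) '' Icc (0 : ℝ × ℝ) 1)) * Vol * δ ≥
      ∫ x in Icc (0 : ℝ × ℝ) 1,
        (deriv ψ (f x) * (4 / f x - deriv ψ (f x) / ψ (f x))) *
          ((pd1 f x) ^ 2 + (pd2 f x) ^ 2) := by
  subst hμ hδ hVol
  set μ0 : Measure ((ℝ × ℝ) × ℝ) :=
    (volume.restrict Ω).withDensity fun z => ENNReal.ofReal (f z.1) with hμ0def
  -- basic continuity facts
  have hfc : Continuous f := hf.continuous
  have hfnn : ∀ x, 0 ≤ f x := fun x => (hfpos x).le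
  have hψfpos : ∀ x : ℝ × ℝ, 0 < ψ (f x) := fun x => hψpos _ (hfpos x)
  have hf3 : ContDiff ℝ 3 f := hf.of_le (WithTop.coe_le_coe.2 (le_top : (3:ℕ∞) ≤ ⊤))
  set L : ℝ × ℝ → ℝ := fun y => Real.log (f y) with hLdef
  have hL : ContDiff ℝ 3 L := hf3.log (fun x => (hfpos x).ne')
  have hu1 : ContDiff ℝ 2 (pd1 L) := pd1_contDiff hL
  have hu2 : ContDiff ℝ 2 (pd2 L) := pd2_contDiff hL
  have hlapc : Continuous (lap2 L) := by
    have c1 : Continuous (pd1 (pd1 L)) :=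
      (pd1_contDiff (hu1.of_le (by norm_num) : ContDiff ℝ (1+1) (pd1 L))).continuous
    have c2 : Continuous (pd2 (pd2 L)) :=
      (pd2_contDiff (hu2.of_le (by norm_num) : ContDiff ℝ (1+1) (pd2 L))).continuous
    exact c1.add c2
  have hKc : Continuous K := by
    have : K = fun x => -(lap2 L x) / (2 * f x) := funext hK
    rw [this]
    exact (hlapc.neg).div (continuous_const.mul hfc) (fun x => ne_of_gt (by linarith [hfpos x]))
  have hψd : ∀ t : ℝ, 0 < t → HasDerivAt ψ (deriv ψ t) t := fun t ht =>
    ((hψ.contDiffAt (Ioi_mem_nhds ht)).differentiableAt (by simp)).hasDerivAt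
  have hψfc : Continuous (fun x => ψ (f x)) := by
    have : ContinuousOn ψ (Ioi 0) := hψ.continuousOn
    exact this.comp_continuous hfc (fun x => hfpos x)
  have hdψfc : Continuous (fun x => deriv ψ (f x)) := by
    have h1 : ContDiffOn ℝ 2 (derivWithin ψ (Ioi 0)) (Ioi 0) :=
      hψ.derivWithin (isOpen_Ioi.uniqueDiffOn) (WithTop.coe_le_coe.2 le_top)
    have h3 : Continuous fun x => derivWithin ψ (Ioi 0) (f x) :=
      h1.continuousOn.comp_continuous hfc (fun x => hfpos x)
    convert h3 using 2 with x
    exact (derivWithin_of_isOpen isOpen_Ioi (hfpos x)).symm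
  have hpd1c : Continuous (pd1 f) :=
    (pd1_contDiff (hf.of_le (WithTop.coe_le_coe.2 le_top) : ContDiff ℝ (1+1) f)).continuous
  have hpd2c : Continuous (pd2 f) :=
    (pd2_contDiff (hf.of_le (WithTop.coe_le_coe.2 le_top) : ContDiff ℝ (1+1) f)).continuous
  -- sets
  set Q : Set (ℝ × ℝ) := Ico (0 : ℝ) 1 ×ˢ Ico (0 : ℝ) 1 with hQdef
  set Qc : Set (ℝ × ℝ) := Icc (0 : ℝ × ℝ) 1 with hQcdef
  have hQsub : Q ⊆ Qc := by
    rw [hQcdef, Icc_prod_eq]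
    simp only [Prod.fst_zero, Prod.snd_zero, Prod.fst_one, Prod.snd_one]
    exact prod_mono Ico_subset_Icc_self Ico_subset_Icc_self
  have hQm : MeasurableSet Q := measurableSet_Ico.prod measurableSet_Ico
  have hΩm : MeasurableSet Ω := by rw [hΩ]; exact hQm.prod measurableSet_Ico
  have hΩdm : MeasurableSet (Ω \ M) := hΩm.diff hMmeas
  have hΩdsub : Ω \ M ⊆ Ω := diff_subset
  have hz1 : ∀ z ∈ Ω, z.1 ∈ Qc := by
    intro z hz
    rw [hΩ] at hz
    exact hQsub hz.1
  -- sup bounds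
  set SK : ℝ := sSup ((fun x => |K x|) '' Qc) with hSKdef
  set Sψ : ℝ := sSup ((fun x => |ψ (f x)|) '' Qc) with hSψdef
  have hQcne : Qc.Nonempty := nonempty_Icc.2 (by constructor <;> norm_num)
  have hQccpt : IsCompact Qc := isCompact_Icc
  have hSKub : ∀ x ∈ Qc, |K x| ≤ SK := fun x hx =>
    le_csSup (hQccpt.bddAbove_image (hKc.abs.continuousOn)) (mem_image_of_mem _ hx)
  have hSψub : ∀ x ∈ Qc, |ψ (f x)| ≤ Sψ := fun x hx =>
    le_csSup (hQccpt.bddAbove_image ((hψfc.abs).continuousOn)) (mem_image_of_mem _ hx)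
  have hSKnn : 0 ≤ SK := le_trans (abs_nonneg _) (hSKub _ hQcne.choose_spec)
  have hSψnn : 0 ≤ Sψ := le_trans (abs_nonneg _) (hSψub _ hQcne.choose_spec)
  -- main functions
  set P : (ℝ × ℝ) × ℝ → ℝ := fun z =>
    (pd1 f z.1 * Real.cos z.2 + pd2 f z.1 * Real.sin z.2) / Real.sqrt (f z.1) with hPdef
  set B : (ℝ × ℝ) × ℝ → ℝ := fun z =>
    deriv ψ (f z.1) ^ 2 * P z ^ 2 / (4 * ψ (f z.1)) with hBdef
  set G : (ℝ × ℝ) × ℝ → ℝ := fun z => ψ (f z.1) * K z.1 with hGdef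
  have hPc : Continuous P := by
    apply Continuous.div
    · exact ((hpd1c.comp continuous_fst).mul (Real.continuous_cos.comp continuous_snd)).add
        ((hpd2c.comp continuous_fst).mul (Real.continuous_sin.comp continuous_snd))
    · exact Real.continuous_sqrt.comp (hfc.comp continuous_fst)
    · exact fun z => ne_of_gt (Real.sqrt_pos.2 (hfpos z.1))
  have hBc : Continuous B := by
    apply Continuous.div
    · exact (((hdψfc.comp continuous_fst).pow 2)).mul (hPc.pow 2)
    · exact continuous_const.mul (hψfc.comp continuous_fst)
    · exact fun z => ne_of_gt (by have := hψfpos z.1; positivity)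
  have hGc : Continuous G := (hψfc.comp continuous_fst).mul (hKc.comp continuous_fst)
  -- integrability of G and B with respect to μ on Ω
  have hGint : IntegrableOn G Ω μ0 := by
    rw [hμ0def, mu_integrableOn hfc hfnn (subset_refl Ω) hΩm]
    rw [hΩ]
    exact integrableOn_box _ ((hfc.comp continuous_fst).mul hGc)
  have hBint : IntegrableOn B Ω μ0 := by
    rw [hμ0def, mu_integrableOn hfc hfnn (subset_refl Ω) hΩm]
    rw [hΩ]
    exact integrableOn_box _ ((hfc.comp continuous_fst).mul hBc)
  have hGintM : IntegrableOn G M μ0 :=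
    hGint.mono_set hMΩ
  have hBintM : IntegrableOn B M μ0 :=
    hBint.mono_set hMΩ
  have hGintD : IntegrableOn G (Ω \ M) μ0 :=
    hGint.mono_set hΩdsub
  -- Step 1: from the Riccati hypothesis
  set A : (ℝ × ℝ) × ℝ → ℝ := fun z => deriv ψ (f z.1) * P z * ω z with hAdef
  set W : (ℝ × ℝ) × ℝ → ℝ := fun z => ψ (f z.1) * ω z ^ 2 with hWdef
  have hAWint : IntegrableOn (fun z => -A z + W z) M μ0 := (hint2.neg).add hint1
  have heq' : (∫ z in M, (-A z + W z) ∂μ0) + ∫ z in M, G z ∂μ0 ≤ 0 := by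
    rw [← integral_add hAWint hGintM]
    exact heq
  have hstep1 : ∫ z in M, G z ∂μ0 ≤ ∫ z in M, B z ∂μ0 := by
    have hAW : IntegrableOn (fun z => A z - W z) M μ0 := hint2.sub hint1
    have h2 : ∫ z in M, G z ∂μ0 ≤ ∫ z in M, (A z - W z) ∂μ0 := by
      have e1 : ∫ z in M, (A z - W z) ∂μ0 = - ∫ z in M, (-A z + W z) ∂μ0 := by
        rw [← integral_neg]
        apply integral_congr_ae
        filter_upwards with z
        ring
      rw [e1]
      linarith [heq']
    refine le_trans h2 (setIntegral_mono_on hAW hBintM hMmeas ?_)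
    intro z _
    have hs : 0 < ψ (f z.1) := hψfpos z.1
    rw [hAdef, hWdef, hBdef]
    simp only
    rw [le_div_iff₀ (by positivity)]
    nlinarith [sq_nonneg (deriv ψ (f z.1) * P z - 2 * ψ (f z.1) * ω z), sq_nonneg (ω z), hs]
  have hstep2 : ∫ z in M, B z ∂μ0 ≤ ∫ z in Ω, B z ∂μ0 := by
    refine setIntegral_mono_set hBint ?_ (HasSubset.Subset.eventuallyLE hMΩ)
    filter_upwards with z
    rw [hBdef]
    have := hψfpos z.1
    positivity
  -- evaluation of ∫_Ω B dμ0
  set I2' : ℝ := ∫ x in Qc, deriv ψ (f x) ^ 2 / (4 * ψ (f x))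
      * ((pd1 f x) ^ 2 + (pd2 f x) ^ 2) with hI2def
  have hstep3 : ∫ z in Ω, B z ∂μ0 = π * I2' := by
    rw [hμ0def, mu_setIntegral hfc hfnn (subset_refl Ω) hΩm]
    have hfB : ∀ z : (ℝ × ℝ) × ℝ, f z.1 * B z
        = deriv ψ (f z.1) ^ 2 / (4 * ψ (f z.1))
          * (pd1 f z.1 * Real.cos z.2 + pd2 f z.1 * Real.sin z.2) ^ 2 := by
      intro z
      rw [hBdef, hPdef]
      simp only
      rw [div_pow, Real.sq_sqrt (hfnn z.1)]
      have h1 : f z.1 ≠ 0 := (hfpos z.1).ne'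
      have h2 : ψ (f z.1) ≠ 0 := (hψfpos z.1).ne'
      field_simp
    rw [setIntegral_congr_fun hΩm (fun z _ => hfB z), hΩ]
    have hCc : Continuous fun x : ℝ × ℝ => deriv ψ (f x) ^ 2 / (4 * ψ (f x)) :=
      (hdψfc.pow 2).div (continuous_const.mul hψfc)
        (fun x => ne_of_gt (by have := hψfpos x; positivity))
    have hNc : Continuous fun z : (ℝ × ℝ) × ℝ =>
        pd1 f z.1 * Real.cos z.2 + pd2 f z.1 * Real.sin z.2 :=
      ((hpd1c.comp continuous_fst).mul (Real.continuous_cos.comp continuous_snd)).add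
        ((hpd2c.comp continuous_fst).mul (Real.continuous_sin.comp continuous_snd))
    have hu : Continuous fun z : (ℝ × ℝ) × ℝ => deriv ψ (f z.1) ^ 2 / (4 * ψ (f z.1))
        * (pd1 f z.1 * Real.cos z.2 + pd2 f z.1 * Real.sin z.2) ^ 2 :=
      (hCc.comp continuous_fst).mul (hNc.pow 2)
    rw [fubini_omega _ hu]
    have hinner : ∀ x : ℝ × ℝ, (∫ φ in Ico (0 : ℝ) (2 * π),
        deriv ψ (f (x, φ).1) ^ 2 / (4 * ψ (f (x, φ).1))
          * (pd1 f (x, φ).1 * Real.cos (x, φ).2 + pd2 f (x, φ).1 * Real.sin (x, φ).2) ^ 2)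
        = π * (deriv ψ (f x) ^ 2 / (4 * ψ (f x)) * ((pd1 f x) ^ 2 + (pd2 f x) ^ 2)) := by
      intro x
      simp only
      rw [integral_const_mul, trig_integral]
      ring
    rw [setIntegral_congr_fun hQm (fun x _ => hinner x), integral_const_mul,
      setIntegral_congr_set square_ae_eq, hI2def]
  -- evaluation of ∫_Ω G dμ0 via integration by parts
  set I1' : ℝ := ∫ x in Qc, deriv ψ (f x) * ((pd1 f x) ^ 2 + (pd2 f x) ^ 2) / f x with hI1def
  have ht1c : Continuous fun x => deriv ψ (f x) * ((pd1 f x) ^ 2 + (pd2 f x) ^ 2) / f x :=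
    (hdψfc.mul ((hpd1c.pow 2).add (hpd2c.pow 2))).div hfc (fun x => (hfpos x).ne')
  have ht2c : Continuous fun x => ψ (f x) * lap2 L x := hψfc.mul hlapc
  have ht1int : IntegrableOn (fun x => deriv ψ (f x) * ((pd1 f x) ^ 2 + (pd2 f x) ^ 2) / f x)
      Qc volume := ht1c.continuousOn.integrableOn_compact hQccpt
  have ht2int : IntegrableOn (fun x => ψ (f x) * lap2 L x) Qc volume :=
    ht2c.continuousOn.integrableOn_compact hQccpt
  have hibp2 : ∫ x in Qc, ψ (f x) * lap2 L x = - I1' := by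
    have hibp := torus_ibp f hf hfpos hfper ψ hψ
    rw [hQcdef] at ht1int ht2int ⊢
    rw [integral_add ht1int ht2int] at hibp
    rw [hI1def, hQcdef]
    linarith
  have hstep4 : ∫ z in Ω, G z ∂μ0 = π * I1' := by
    rw [hμ0def, mu_setIntegral hfc hfnn (subset_refl Ω) hΩm, hΩ]
    have hu : Continuous fun z : (ℝ × ℝ) × ℝ => f z.1 * G z := by
      rw [hGdef]
      exact (hfc.comp continuous_fst).mul
        ((hψfc.comp continuous_fst).mul (hKc.comp continuous_fst))
    rw [fubini_omega _ hu]
    have hvI : (volume (Ico (0 : ℝ) (2 * π))).toReal = 2 * π := by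
      rw [Real.volume_Ico, sub_zero, ENNReal.toReal_ofReal (by positivity)]
    have hinner : ∀ x : ℝ × ℝ, (∫ φ in Ico (0 : ℝ) (2 * π), f (x, φ).1 * G (x, φ))
        = 2 * π * (f x * (ψ (f x) * K x)) := by
      intro x
      rw [hGdef]
      simp only
      rw [setIntegral_const, measureReal_def, hvI, smul_eq_mul]
    rw [setIntegral_congr_fun hQm (fun x _ => hinner x), integral_const_mul,
      setIntegral_congr_set square_ae_eq]
    have hgt2 : ∀ x : ℝ × ℝ, f x * (ψ (f x) * K x) = -(ψ (f x) * lap2 L x) / 2 := by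
      intro x
      rw [hK x]
      have h1 : f x ≠ 0 := (hfpos x).ne'
      field_simp
    rw [setIntegral_congr_fun measurableSet_Icc (fun x _ => hgt2 x)]
    have : ∫ x in Qc, -(ψ (f x) * lap2 L x) / 2 = - (∫ x in Qc, ψ (f x) * lap2 L x) / 2 := by
      rw [← integral_neg, ← integral_div]
    rw [hQcdef] at this
    rw [this]
    rw [show (∫ x in Icc (0:ℝ×ℝ) 1, ψ (f x) * lap2 L x) = ∫ x in Qc, ψ (f x) * lap2 L x
      from by rw [hQcdef], hibp2]
    ring
  -- splitting over M and its complement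
  have hsplit : ∫ z in Ω, G z ∂μ0
      = (∫ z in M, G z ∂μ0) + ∫ z in Ω \ M, G z ∂μ0 := by
    have hun : M ∪ (Ω \ M) = Ω := union_diff_cancel hMΩ
    have h := setIntegral_union (disjoint_sdiff_self_right) hΩdm hGintM hGintD
    rw [hun] at h
    exact h
  -- error bound
  set m : ℝ := (μ0 (Ω \ M)).toReal with hmdef
  have hfintΩ : IntegrableOn (fun z : (ℝ × ℝ) × ℝ => f z.1) Ω volume := by
    rw [hΩ]; exact integrableOn_box _ (hfc.comp continuous_fst)
  have hfintD : IntegrableOn (fun z : (ℝ × ℝ) × ℝ => f z.1) (Ω \ M) volume :=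
    hfintΩ.mono_set hΩdsub
  have hmeq : m = ∫ z in Ω \ M, f z.1 := by
    rw [hmdef, hμ0def]
    exact mu_measure_eq hfc hfnn hΩdsub hΩdm hfintD
  have hmnn : 0 ≤ m := ENNReal.toReal_nonneg
  have hfGD : IntegrableOn (fun z => f z.1 * G z) (Ω \ M) volume := by
    refine IntegrableOn.mono_set ?_ hΩdsub
    rw [hΩ]
    refine integrableOn_box _ ?_
    rw [hGdef]
    exact (hfc.comp continuous_fst).mul
      ((hψfc.comp continuous_fst).mul (hKc.comp continuous_fst))
  have hEb : |∫ z in Ω \ M, G z ∂μ0| ≤ SK * Sψ * m := by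
    rw [hμ0def, mu_setIntegral hfc hfnn hΩdsub hΩdm]
    have h0 : |∫ z in Ω \ M, f z.1 * G z| ≤ ∫ z in Ω \ M, |f z.1 * G z| := by
      simpa [Real.norm_eq_abs, abs_mul] using
        norm_integral_le_integral_norm (μ := volume.restrict (Ω \ M)) (fun z => f z.1 * G z)
    refine le_trans h0 ?_
    have hmono : ∫ z in Ω \ M, |f z.1 * G z|
        ≤ ∫ z in Ω \ M, (SK * Sψ) * f z.1 := by
      refine setIntegral_mono_on hfGD.abs (hfintD.const_mul _) hΩdm ?_
      intro z hz
      have hzQ : z.1 ∈ Qc := hz1 z (hΩdsub hz)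
      rw [hGdef]
      simp only
      calc |f z.1 * (ψ (f z.1) * K z.1)| = f z.1 * (|ψ (f z.1)| * |K z.1|) := by
            rw [abs_mul, abs_mul, abs_of_nonneg (hfnn z.1)]
        _ ≤ f z.1 * (Sψ * SK) := by
            refine mul_le_mul_of_nonneg_left ?_ (hfnn z.1)
            exact mul_le_mul (hSψub _ hzQ) (hSKub _ hzQ) (abs_nonneg _) hSψnn
        _ = SK * Sψ * f z.1 := by ring
    refine le_trans hmono ?_
    rw [integral_const_mul, ← hmeq]
  -- positivity of the volume
  have hVolpos : 0 < ∫ x in Qc, f x := by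
    obtain ⟨p, hp, hmin⟩ := hQccpt.exists_isMinOn hQcne hfc.continuousOn
    have hμQc : volume Qc = 1 := by
      rw [hQcdef, Icc_prod_eq]
      simp only [Prod.fst_zero, Prod.snd_zero, Prod.fst_one, Prod.snd_one]
      rw [Measure.volume_eq_prod, Measure.prod_prod, Real.volume_Icc]
      norm_num
    have hge := setIntegral_ge_of_const_le (μ := volume) (s := Qc) (c := f p)
      measurableSet_Icc (by rw [hμQc]; exact ENNReal.one_ne_top)
      (fun x hx => hmin hx) (hfc.continuousOn.integrableOn_compact hQccpt)
    rw [measureReal_def, hμQc] at hge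
    simp only [ENNReal.toReal_one, one_smul] at hge
    exact lt_of_lt_of_le (hfpos p) hge
  -- combine
  have hfin : π * I1' ≤ π * I2' + SK * Sψ * m := by
    have e0 : ∫ z in Ω \ M, G z ∂μ0 ≤ SK * Sψ * m :=
      le_trans (le_abs_self _) hEb
    have h1 : π * I1' = (∫ z in M, G z ∂μ0) + ∫ z in Ω \ M, G z ∂μ0 := by
      rw [← hsplit, hstep4]
    have h2 : ∫ z in M, G z ∂μ0 ≤ π * I2' := by
      rw [← hstep3]; exact le_trans hstep1 hstep2
    linarith
  -- rewrite the target integral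
  have hT : ∫ x in Qc, (deriv ψ (f x) * (4 / f x - deriv ψ (f x) / ψ (f x)))
      * ((pd1 f x) ^ 2 + (pd2 f x) ^ 2) = 4 * I1' - 4 * I2' := by
    have e : ∀ x ∈ Qc, (deriv ψ (f x) * (4 / f x - deriv ψ (f x) / ψ (f x)))
        * ((pd1 f x) ^ 2 + (pd2 f x) ^ 2)
        = 4 * (deriv ψ (f x) * ((pd1 f x) ^ 2 + (pd2 f x) ^ 2) / f x)
          - 4 * (deriv ψ (f x) ^ 2 / (4 * ψ (f x)) * ((pd1 f x) ^ 2 + (pd2 f x) ^ 2)) := by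
      intro x _
      have h1 : f x ≠ 0 := (hfpos x).ne'
      have h2 : ψ (f x) ≠ 0 := (hψfpos x).ne'
      field_simp
    have ht2'int : IntegrableOn (fun x => deriv ψ (f x) ^ 2 / (4 * ψ (f x))
        * ((pd1 f x) ^ 2 + (pd2 f x) ^ 2)) Qc volume := by
      refine ContinuousOn.integrableOn_compact hQccpt ?_
      refine Continuous.continuousOn ?_
      exact ((hdψfc.pow 2).div (continuous_const.mul hψfc)
        (fun x => ne_of_gt (mul_pos four_pos (hψfpos x)))).mul
        ((hpd1c.pow 2).add (hpd2c.pow 2))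
    rw [setIntegral_congr_fun measurableSet_Icc e,
      integral_sub (ht1int.const_mul 4) (ht2'int.const_mul 4),
      integral_const_mul, integral_const_mul, hI1def, hI2def, hQcdef]
  rw [ge_iff_le, hT]
  have hVolne : (∫ x in Qc, f x) ≠ 0 := hVolpos.ne'
  have hrhs : 8 * SK * Sψ * (∫ x in Qc, f x) * (m / (2 * π * (∫ x in Qc, f x)))
      = 4 * (SK * Sψ * m) / π := by
    field_simp
    ring
  rw [hrhs, le_div_iff₀ pi_pos]
  nlinarith [hfin]
end

section
/- Let 0 < α < 4, let f, K, Ω, μ, Vol be as in the two-dimensional conformal torus setup, let M ⊆ Ω be measurable, set δ := μ(Ω \ M) / (2π·Vol), and let ω : Ω → ℝ be measurable such that the functions (x,φ) ↦ f(x)^α·ω(x,φ)² and (x,φ) ↦ α·f(x)^{α−1}·((∂₁f(x)·cos φ + ∂₂f(x)·sin φ)/√(f(x)))·ω(x,φ) are μ-integrable on M and satisfy ∫_M [ −α·f(x)^{α−1}·((∂₁f(x)·cos φ + ∂₂f(x)·sin φ)/√(f(x)))·ω + f(x)^α·ω² + f(x)^α·K(x) ] dμ ≤ 0. Then 8·‖K‖_∞·(sup_{[0,1]²}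 f)^α·Vol·δ ≥ α(4−α)·∫_{[0,1]²} f(x)^{α−2}·|∇f(x)|² dx. -/
open MeasureTheory Real Set

open scoped NNReal ENNReal

lemma contDiff_pd1 {g : ℝ × ℝ → ℝ} (hg : ContDiff ℝ (⊤ : ℕ∞) g) : ContDiff ℝ (⊤ : ℕ∞) (pd1 g) := by
  have h1 : ContDiff ℝ (⊤ : ℕ∞) (fun y => fderiv ℝ g y) := hg.fderiv_right (by simp)
  exact (ContinuousLinearMap.apply ℝ ℝ ((1:ℝ), (0:ℝ))).contDiff.comp h1

lemma contDiff_pd2 {g : ℝ × ℝ → ℝ} (hg : ContDiff ℝ (⊤ : ℕ∞) g) : ContDiff ℝ (⊤ : ℕ∞) (pd2 g) := by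
  have h1 : ContDiff ℝ (⊤ : ℕ∞) (fun y => fderiv ℝ g y) := hg.fderiv_right (by simp)
  exact (ContinuousLinearMap.apply ℝ ℝ ((0:ℝ), (1:ℝ))).contDiff.comp h1

lemma fderiv_periodic {g : ℝ × ℝ → ℝ} (hg : Differentiable ℝ g) (c : ℝ × ℝ)
    (hper : ∀ x, g (x + c) = g x) (x : ℝ × ℝ) :
    fderiv ℝ g (x + c) = fderiv ℝ g x := by
  have h : HasFDerivAt (fun y => g (y + c)) (fderiv ℝ g (x + c)) x := by
    have := (hg (x + c)).hasFDerivAt.comp x ((hasFDerivAt_id x).add_const c)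
    simpa [Function.comp_def] using this
  have h2 : (fun y => g (y + c)) = g := funext hper
  rw [h2] at h
  exact (h.fderiv).symm ▸ h.fderiv

lemma Icc_box : (Icc (0:ℝ×ℝ) 1) = Icc (0:ℝ) 1 ×ˢ Icc (0:ℝ) 1 := by
  rw [Icc_prod_eq]; rfl

lemma torus_integral_pd1 {g : ℝ × ℝ → ℝ} (hg : ContDiff ℝ (⊤ : ℕ∞) g)
    (h1 : ∀ x : ℝ × ℝ, g (x.1 + 1, x.2) = g x) :
    ∫ x in Icc (0:ℝ×ℝ) 1, pd1 g x = 0 := by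
  have hcont : Continuous (pd1 g) := (contDiff_pd1 hg).continuous
  have hint : IntegrableOn (pd1 g) (Icc (0:ℝ) 1 ×ˢ Icc (0:ℝ) 1)
      ((volume : Measure ℝ).prod volume) := by
    rw [← Measure.volume_eq_prod]
    exact hcont.continuousOn.integrableOn_compact (isCompact_Icc.prod isCompact_Icc)
  rw [Icc_box, Measure.volume_eq_prod, ← Measure.prod_restrict]
  rw [integral_prod_symm _ (by rwa [Measure.prod_restrict])]
  have inner : ∀ y : ℝ, ∫ x in Icc (0:ℝ) 1, pd1 g (x, y) = 0 := by
    intro y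
    have hderiv : ∀ t ∈ uIcc (0:ℝ) 1, HasDerivAt (fun s => g (s, y)) (pd1 g (t, y)) t := by
      intro t _
      have hc : HasDerivAt (fun s : ℝ => (s, y)) ((1:ℝ), (0:ℝ)) t :=
        (hasDerivAt_id t).prodMk (hasDerivAt_const t y)
      exact (hg.differentiable (by simp) (t, y)).hasFDerivAt.comp_hasDerivAt t hc
    have hii : IntervalIntegrable (fun t => pd1 g (t, y)) volume 0 1 :=
      (hcont.comp (continuous_id.prodMk continuous_const)).intervalIntegrable 0 1
    have := intervalIntegral.integral_eq_sub_of_hasDerivAt hderiv hii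
    have h0 : g (1, y) = g (0, y) := by simpa using h1 (0, y)
    rw [MeasureTheory.integral_Icc_eq_integral_Ioc,
      ← intervalIntegral.integral_of_le (by norm_num : (0:ℝ) ≤ 1)]
    rw [this, h0, sub_self]
  simp only [inner, integral_zero]

lemma torus_integral_pd2 {g : ℝ × ℝ → ℝ} (hg : ContDiff ℝ (⊤ : ℕ∞) g)
    (h2 : ∀ x : ℝ × ℝ, g (x.1, x.2 + 1) = g x) :
    ∫ x in Icc (0:ℝ×ℝ) 1, pd2 g x = 0 := by
  have hcont : Continuous (pd2 g) := (contDiff_pd2 hg).continuous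
  have hint : IntegrableOn (pd2 g) (Icc (0:ℝ) 1 ×ˢ Icc (0:ℝ) 1)
      ((volume : Measure ℝ).prod volume) := by
    rw [← Measure.volume_eq_prod]
    exact hcont.continuousOn.integrableOn_compact (isCompact_Icc.prod isCompact_Icc)
  rw [Icc_box, Measure.volume_eq_prod, ← Measure.prod_restrict]
  rw [integral_prod _ (by rwa [Measure.prod_restrict])]
  have inner : ∀ x : ℝ, ∫ y in Icc (0:ℝ) 1, pd2 g (x, y) = 0 := by
    intro x
    have hderiv : ∀ t ∈ uIcc (0:ℝ) 1, HasDerivAt (fun s => g (x, s)) (pd2 g (x, t)) t := by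
      intro t _
      have hc : HasDerivAt (fun s : ℝ => (x, s)) ((0:ℝ), (1:ℝ)) t :=
        (hasDerivAt_const t x).prodMk (hasDerivAt_id t)
      exact (hg.differentiable (by simp) (x, t)).hasFDerivAt.comp_hasDerivAt t hc
    have hii : IntervalIntegrable (fun t => pd2 g (x, t)) volume 0 1 :=
      (hcont.comp (continuous_const.prodMk continuous_id)).intervalIntegrable 0 1
    have := intervalIntegral.integral_eq_sub_of_hasDerivAt hderiv hii
    have h0 : g (x, 1) = g (x, 0) := by simpa using h2 (x, 0)
    rw [MeasureTheory.integral_Icc_eq_integral_Ioc,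
      ← intervalIntegral.integral_of_le (by norm_num : (0:ℝ) ≤ 1)]
    rw [this, h0, sub_self]
  simp only [inner, integral_zero]

section derivs

lemma contDiff_pdv (v : ℝ × ℝ) {g : ℝ × ℝ → ℝ} (hg : ContDiff ℝ (⊤ : ℕ∞) g) :
    ContDiff ℝ (⊤ : ℕ∞) (fun x => fderiv ℝ g x v) :=
  (ContinuousLinearMap.apply ℝ ℝ v).contDiff.comp (hg.fderiv_right (by simp))

lemma fderiv_log_apply {f : ℝ × ℝ → ℝ} (hf : ContDiff ℝ (⊤ : ℕ∞) f) (hfpos : ∀ x, 0 < f x) (v : ℝ × ℝ) (x : ℝ × ℝ) :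
    fderiv ℝ (fun y => Real.log (f y)) x v = (f x)⁻¹ * fderiv ℝ f x v := by
  have h := ((hf.differentiable (by simp) x).hasFDerivAt).log (ne_of_gt (hfpos x))
  rw [h.fderiv]
  simp

lemma fderiv_log_eq {f : ℝ × ℝ → ℝ} (hf : ContDiff ℝ (⊤ : ℕ∞) f) (hfpos : ∀ x, 0 < f x) (v : ℝ × ℝ) :
    (fun y => fderiv ℝ (fun z => Real.log (f z)) y v)
      = fun y => (f y)⁻¹ * fderiv ℝ f y v :=
  funext fun y => fderiv_log_apply hf hfpos v y

lemma fderiv2_log_apply {f : ℝ × ℝ → ℝ} (hf : ContDiff ℝ (⊤ : ℕ∞) f) (hfpos : ∀ x, 0 < f x) (v w : ℝ × ℝ) (x : ℝ × ℝ) :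
    fderiv ℝ (fun y => fderiv ℝ (fun z => Real.log (f z)) y v) x w
      = (f x)⁻¹ * fderiv ℝ (fun y => fderiv ℝ f y v) x w
        - (fderiv ℝ f x v * fderiv ℝ f x w) / (f x) ^ 2 := by
  rw [fderiv_log_eq hf hfpos v]
  have hinv : HasFDerivAt (fun y => (f y)⁻¹) ((-((f x) ^ 2)⁻¹) • fderiv ℝ f x) x :=
    (hasDerivAt_inv (ne_of_gt (hfpos x))).comp_hasFDerivAt x
      (hf.differentiable (by simp) x).hasFDerivAt
  have hp : HasFDerivAt (fun y => fderiv ℝ f y v)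
      (fderiv ℝ (fun y => fderiv ℝ f y v) x) x :=
    ((contDiff_pdv v hf).differentiable (by simp) x).hasFDerivAt
  have h := hinv.mul hp
  rw [(show HasFDerivAt (fun y => (f y)⁻¹ * fderiv ℝ f y v) _ x from h).fderiv]
  simp only [ContinuousLinearMap.add_apply, ContinuousLinearMap.smul_apply, smul_eq_mul]
  ring

lemma fderiv_rpow_mul_apply {f : ℝ × ℝ → ℝ} (hf : ContDiff ℝ (⊤ : ℕ∞) f) (hfpos : ∀ x, 0 < f x) (β : ℝ) (v w : ℝ × ℝ) (x : ℝ × ℝ) :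
    fderiv ℝ (fun y => f y ^ β * fderiv ℝ f y v) x w
      = f x ^ β * fderiv ℝ (fun y => fderiv ℝ f y v) x w
        + β * f x ^ (β - 1) * (fderiv ℝ f x v * fderiv ℝ f x w) := by
  have hr : HasFDerivAt (fun y => f y ^ β) ((β * f x ^ (β - 1)) • fderiv ℝ f x) x :=
    ((hf.differentiable (by simp) x).hasFDerivAt).rpow_const (Or.inl (ne_of_gt (hfpos x)))
  have hp : HasFDerivAt (fun y => fderiv ℝ f y v)
      (fderiv ℝ (fun y => fderiv ℝ f y v) x) x :=
    ((contDiff_pdv v hf).differentiable (by simp) x).hasFDerivAt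
  have h := hr.mul hp
  rw [(show HasFDerivAt (fun y => f y ^ β * fderiv ℝ f y v) _ x from h).fderiv]
  simp only [ContinuousLinearMap.add_apply, ContinuousLinearMap.smul_apply, smul_eq_mul]
  ring

end derivs

section ibp

lemma rpow_helper1 {t : ℝ} (ht : 0 < t) (α : ℝ) : t ^ α * t⁻¹ = t ^ (α - 1) := by
  rw [Real.rpow_sub ht, Real.rpow_one, div_eq_mul_inv]

lemma rpow_helper2 {t : ℝ} (ht : 0 < t) (α : ℝ) : t ^ α / t ^ 2 = t ^ (α - 2) := by
  rw [Real.rpow_sub ht, show ((2:ℝ) = ((2:ℕ):ℝ)) by norm_num, Real.rpow_natCast]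

lemma ibp_pd1 {f : ℝ × ℝ → ℝ} (hf : ContDiff ℝ (⊤ : ℕ∞) f) (hfpos : ∀ x, 0 < f x)
    (hp1 : ∀ x, f (x + ((1:ℝ), (0:ℝ))) = f x) (hp2 : ∀ x, f (x + ((0:ℝ), (1:ℝ))) = f x)
    (α : ℝ) :
    ∫ x in Icc (0:ℝ×ℝ) 1, f x ^ α * pd1 (pd1 (fun y => Real.log (f y))) x
      = -α * ∫ x in Icc (0:ℝ×ℝ) 1, f x ^ (α - 2) * (pd1 f x) ^ 2 := by
  set G : ℝ × ℝ → ℝ := fun y => f y ^ (α - 1) * pd1 f y with hG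
  have hfne : ∀ x, f x ≠ 0 := fun x => ne_of_gt (hfpos x)
  have hGsmooth : ContDiff ℝ (⊤ : ℕ∞) G :=
    (hf.rpow_const_of_ne hfne).mul (contDiff_pd1 hf)
  have hpd1per : ∀ (c : ℝ × ℝ), (∀ x, f (x + c) = f x) → ∀ x, pd1 f (x + c) = pd1 f x := by
    intro c hc x
    unfold pd1
    rw [fderiv_periodic (hf.differentiable (by simp)) c hc x]
  have hGper1 : ∀ x : ℝ × ℝ, G (x.1 + 1, x.2) = G x := by
    intro x
    have hx : (x.1 + 1, x.2) = x + ((1:ℝ), (0:ℝ)) := by simp [Prod.ext_iff]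
    rw [hx, hG]
    simp only [hp1 x, hpd1per _ hp1 x]
  have hGper2 : ∀ x : ℝ × ℝ, G (x.1, x.2 + 1) = G x := by
    intro x
    have hx : (x.1, x.2 + 1) = x + ((0:ℝ), (1:ℝ)) := by simp [Prod.ext_iff]
    rw [hx, hG]
    simp only [hp2 x, hpd1per _ hp2 x]
  -- pointwise identity
  have key : ∀ x, f x ^ α * pd1 (pd1 (fun y => Real.log (f y))) x
      = pd1 G x - α * (f x ^ (α - 2) * (pd1 f x) ^ 2) := by
    intro x
    have h2 := fderiv2_log_apply hf hfpos ((1:ℝ), (0:ℝ)) ((1:ℝ), (0:ℝ)) x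
    have h3 := fderiv_rpow_mul_apply hf hfpos (α - 1) ((1:ℝ), (0:ℝ)) ((1:ℝ), (0:ℝ)) x
    have e1 : pd1 (pd1 (fun y => Real.log (f y))) x
        = (f x)⁻¹ * pd1 (pd1 f) x - (pd1 f x * pd1 f x) / (f x) ^ 2 := h2
    have e2 : pd1 G x
        = f x ^ (α - 1) * pd1 (pd1 f) x + (α - 1) * f x ^ (α - 1 - 1) * (pd1 f x * pd1 f x) :=
      h3
    rw [e1, e2]
    have r1 : f x ^ α * (f x)⁻¹ = f x ^ (α - 1) := rpow_helper1 (hfpos x) α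
    have r2 : f x ^ α / f x ^ 2 = f x ^ (α - 2) := rpow_helper2 (hfpos x) α
    have r3 : α - 1 - 1 = α - 2 := by ring
    rw [r3]
    have expand : f x ^ α * ((f x)⁻¹ * pd1 (pd1 f) x - pd1 f x * pd1 f x / f x ^ 2)
        = (f x ^ α * (f x)⁻¹) * pd1 (pd1 f) x - (f x ^ α / f x ^ 2) * (pd1 f x * pd1 f x) := by
      ring
    rw [expand, r1, r2]
    ring
  rw [MeasureTheory.setIntegral_congr_fun measurableSet_Icc (fun x _ => key x)]
  have hcont1 : Continuous (pd1 G) := (contDiff_pd1 hGsmooth).continuous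
  have hcont2 : Continuous fun x => f x ^ (α - 2) * (pd1 f x) ^ 2 :=
    ((hf.rpow_const_of_ne hfne).mul ((contDiff_pd1 hf).pow 2)).continuous
  have hi1 : IntegrableOn (pd1 G) (Icc (0:ℝ×ℝ) 1) volume :=
    hcont1.continuousOn.integrableOn_compact isCompact_Icc
  have hi2 : IntegrableOn (fun x => α * (f x ^ (α - 2) * (pd1 f x) ^ 2)) (Icc (0:ℝ×ℝ) 1)
      volume := ((hcont2.continuousOn.integrableOn_compact isCompact_Icc).const_mul α)
  rw [MeasureTheory.integral_sub hi1 hi2, torus_integral_pd1 hGsmooth hGper1,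
    MeasureTheory.integral_const_mul]
  ring

end ibp

lemma ibp_pd2 {f : ℝ × ℝ → ℝ} (hf : ContDiff ℝ (⊤ : ℕ∞) f) (hfpos : ∀ x, 0 < f x)
    (hp1 : ∀ x, f (x + ((1:ℝ), (0:ℝ))) = f x) (hp2 : ∀ x, f (x + ((0:ℝ), (1:ℝ))) = f x)
    (α : ℝ) :
    ∫ x in Icc (0:ℝ×ℝ) 1, f x ^ α * pd2 (pd2 (fun y => Real.log (f y))) x
      = -α * ∫ x in Icc (0:ℝ×ℝ) 1, f x ^ (α - 2) * (pd2 f x) ^ 2 := by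
  set G : ℝ × ℝ → ℝ := fun y => f y ^ (α - 1) * pd2 f y with hG
  have hfne : ∀ x, f x ≠ 0 := fun x => ne_of_gt (hfpos x)
  have hGsmooth : ContDiff ℝ (⊤ : ℕ∞) G :=
    (hf.rpow_const_of_ne hfne).mul (contDiff_pd2 hf)
  have hpd2per : ∀ (c : ℝ × ℝ), (∀ x, f (x + c) = f x) → ∀ x, pd2 f (x + c) = pd2 f x := by
    intro c hc x
    unfold pd2
    rw [fderiv_periodic (hf.differentiable (by simp)) c hc x]
  have hGper2 : ∀ x : ℝ × ℝ, G (x.1, x.2 + 1) = G x := by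
    intro x
    have hx : (x.1, x.2 + 1) = x + ((0:ℝ), (1:ℝ)) := by simp [Prod.ext_iff]
    rw [hx, hG]
    simp only [hp2 x, hpd2per _ hp2 x]
  have key : ∀ x, f x ^ α * pd2 (pd2 (fun y => Real.log (f y))) x
      = pd2 G x - α * (f x ^ (α - 2) * (pd2 f x) ^ 2) := by
    intro x
    have h2 := fderiv2_log_apply hf hfpos ((0:ℝ), (1:ℝ)) ((0:ℝ), (1:ℝ)) x
    have h3 := fderiv_rpow_mul_apply hf hfpos (α - 1) ((0:ℝ), (1:ℝ)) ((0:ℝ), (1:ℝ)) x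
    have e1 : pd2 (pd2 (fun y => Real.log (f y))) x
        = (f x)⁻¹ * pd2 (pd2 f) x - (pd2 f x * pd2 f x) / (f x) ^ 2 := h2
    have e2 : pd2 G x
        = f x ^ (α - 1) * pd2 (pd2 f) x + (α - 1) * f x ^ (α - 1 - 1) * (pd2 f x * pd2 f x) :=
      h3
    rw [e1, e2]
    have r1 : f x ^ α * (f x)⁻¹ = f x ^ (α - 1) := rpow_helper1 (hfpos x) α
    have r2 : f x ^ α / f x ^ 2 = f x ^ (α - 2) := rpow_helper2 (hfpos x) α
    have r3 : α - 1 - 1 = α - 2 := by ring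
    rw [r3]
    have expand : f x ^ α * ((f x)⁻¹ * pd2 (pd2 f) x - pd2 f x * pd2 f x / f x ^ 2)
        = (f x ^ α * (f x)⁻¹) * pd2 (pd2 f) x - (f x ^ α / f x ^ 2) * (pd2 f x * pd2 f x) := by
      ring
    rw [expand, r1, r2]
    ring
  rw [MeasureTheory.setIntegral_congr_fun measurableSet_Icc (fun x _ => key x)]
  have hcont1 : Continuous (pd2 G) := (contDiff_pd2 hGsmooth).continuous
  have hcont2 : Continuous fun x => f x ^ (α - 2) * (pd2 f x) ^ 2 :=
    ((hf.rpow_const_of_ne hfne).mul ((contDiff_pd2 hf).pow 2)).continuous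
  have hi1 : IntegrableOn (pd2 G) (Icc (0:ℝ×ℝ) 1) volume :=
    hcont1.continuousOn.integrableOn_compact isCompact_Icc
  have hi2 : IntegrableOn (fun x => α * (f x ^ (α - 2) * (pd2 f x) ^ 2)) (Icc (0:ℝ×ℝ) 1)
      volume := ((hcont2.continuousOn.integrableOn_compact isCompact_Icc).const_mul α)
  rw [MeasureTheory.integral_sub hi1 hi2, torus_integral_pd2 hGsmooth hGper2,
    MeasureTheory.integral_const_mul]
  ring

lemma curvature_integral {f : ℝ × ℝ → ℝ} (hf : ContDiff ℝ (⊤ : ℕ∞) f) (hfpos : ∀ x, 0 < f x)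
    (hp1 : ∀ x, f (x + ((1:ℝ), (0:ℝ))) = f x) (hp2 : ∀ x, f (x + ((0:ℝ), (1:ℝ))) = f x)
    {K : ℝ × ℝ → ℝ}
    (hK : ∀ x, K x = -(lap2 (fun y => Real.log (f y)) x) / (2 * f x)) (α : ℝ) :
    ∫ x in Icc (0:ℝ×ℝ) 1, f x ^ α * K x * f x
      = (α / 2) * ∫ x in Icc (0:ℝ×ℝ) 1, f x ^ (α - 2) * ((pd1 f x) ^ 2 + (pd2 f x) ^ 2) := by
  have hfne : ∀ x, f x ≠ 0 := fun x => ne_of_gt (hfpos x)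
  have hlog : ContDiff ℝ (⊤ : ℕ∞) (fun y => Real.log (f y)) := hf.log hfne
  have key : ∀ x, f x ^ α * K x * f x
      = -(1/2) * (f x ^ α * pd1 (pd1 (fun y => Real.log (f y))) x)
        + -(1/2) * (f x ^ α * pd2 (pd2 (fun y => Real.log (f y))) x) := by
    intro x
    rw [hK x, lap2]
    field_simp [hfne x]
    ring
  rw [MeasureTheory.setIntegral_congr_fun measurableSet_Icc (fun x _ => key x)]
  have hcrp : Continuous fun x => f x ^ α := (hf.rpow_const_of_ne hfne).continuous
  have hc1 : Continuous fun x => f x ^ α * pd1 (pd1 (fun y => Real.log (f y))) x :=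
    hcrp.mul (contDiff_pd1 (contDiff_pd1 hlog)).continuous
  have hc2 : Continuous fun x => f x ^ α * pd2 (pd2 (fun y => Real.log (f y))) x :=
    hcrp.mul (contDiff_pd2 (contDiff_pd2 hlog)).continuous
  have hi1 : IntegrableOn (fun x => -(1/2) * (f x ^ α * pd1 (pd1 (fun y => Real.log (f y))) x))
      (Icc (0:ℝ×ℝ) 1) volume :=
    (hc1.continuousOn.integrableOn_compact isCompact_Icc).const_mul _
  have hi2 : IntegrableOn (fun x => -(1/2) * (f x ^ α * pd2 (pd2 (fun y => Real.log (f y))) x))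
      (Icc (0:ℝ×ℝ) 1) volume :=
    (hc2.continuousOn.integrableOn_compact isCompact_Icc).const_mul _
  rw [MeasureTheory.integral_add hi1 hi2, MeasureTheory.integral_const_mul,
    MeasureTheory.integral_const_mul, ibp_pd1 hf hfpos hp1 hp2 α, ibp_pd2 hf hfpos hp1 hp2 α]
  have hcq1 : Continuous fun x => f x ^ (α-2) * (pd1 f x) ^ 2 :=
    ((hf.rpow_const_of_ne hfne).mul ((contDiff_pd1 hf).pow 2)).continuous
  have hcq2 : Continuous fun x => f x ^ (α-2) * (pd2 f x) ^ 2 :=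
    ((hf.rpow_const_of_ne hfne).mul ((contDiff_pd2 hf).pow 2)).continuous
  have split : ∫ x in Icc (0:ℝ×ℝ) 1, f x ^ (α - 2) * ((pd1 f x) ^ 2 + (pd2 f x) ^ 2)
      = (∫ x in Icc (0:ℝ×ℝ) 1, f x ^ (α - 2) * (pd1 f x) ^ 2)
        + ∫ x in Icc (0:ℝ×ℝ) 1, f x ^ (α - 2) * (pd2 f x) ^ 2 := by
    rw [← MeasureTheory.integral_add
      (hcq1.continuousOn.integrableOn_compact isCompact_Icc)
      (hcq2.continuousOn.integrableOn_compact isCompact_Icc)]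
    congr 1; ext x; ring
  rw [split]
  ring

section glue

lemma phi_cos_sq : ∫ φ in Ico (0:ℝ) (2*π), Real.cos φ ^ 2 = π := by
  rw [MeasureTheory.setIntegral_congr_set MeasureTheory.Ico_ae_eq_Ioc,
    ← intervalIntegral.integral_of_le (by positivity : (0:ℝ) ≤ 2*π)]
  rw [integral_cos_sq]
  simp [Real.sin_two_pi, Real.cos_two_pi]

lemma phi_sin_sq : ∫ φ in Ico (0:ℝ) (2*π), Real.sin φ ^ 2 = π := by
  rw [MeasureTheory.setIntegral_congr_set MeasureTheory.Ico_ae_eq_Ioc,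
    ← intervalIntegral.integral_of_le (by positivity : (0:ℝ) ≤ 2*π)]
  rw [integral_sin_sq]
  simp [Real.sin_two_pi, Real.cos_two_pi]

lemma phi_sin_cos : ∫ φ in Ico (0:ℝ) (2*π), Real.sin φ * Real.cos φ = 0 := by
  rw [MeasureTheory.setIntegral_congr_set MeasureTheory.Ico_ae_eq_Ioc,
    ← intervalIntegral.integral_of_le (by positivity : (0:ℝ) ≤ 2*π)]
  rw [integral_sin_mul_cos₁]
  simp [Real.sin_two_pi]

lemma phi_one : ∫ φ in Ico (0:ℝ) (2*π), (1:ℝ) = 2 * π := by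
  simp [Real.volume_Ico, ENNReal.toReal_ofReal (by positivity : (0:ℝ) ≤ 2*π), Real.pi_pos.le]

lemma sq_ae_eq : (Ico (0:ℝ) 1 ×ˢ Ico (0:ℝ) 1 : Set (ℝ×ℝ)) =ᵐ[volume] Icc (0:ℝ×ℝ) 1 := by
  rw [Icc_box, MeasureTheory.ae_eq_set]
  refine ⟨?_, ?_⟩
  · have he : (Ico (0:ℝ) 1 ×ˢ Ico (0:ℝ) 1) \ (Icc (0:ℝ) 1 ×ˢ Icc (0:ℝ) 1) = ∅ :=
      Set.diff_eq_empty.2 (Set.prod_mono Ico_subset_Icc_self Ico_subset_Icc_self)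
    rw [he]; exact MeasureTheory.measure_empty
  · refine MeasureTheory.measure_mono_null
      (t := ({(1:ℝ)} ×ˢ (univ : Set ℝ)) ∪ ((univ : Set ℝ) ×ˢ {(1:ℝ)})) ?_ ?_
    · rintro ⟨x1, x2⟩ ⟨⟨⟨h01, h11⟩, h02, h12⟩, hn⟩
      by_cases e1 : x1 = 1
      · exact Or.inl ⟨e1, trivial⟩
      by_cases e2 : x2 = 1
      · exact Or.inr ⟨trivial, e2⟩
      exact absurd ⟨⟨h01, lt_of_le_of_ne h11 e1⟩, ⟨h02, lt_of_le_of_ne h12 e2⟩⟩ hn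
    · apply MeasureTheory.measure_union_null
      · rw [Measure.volume_eq_prod, Measure.prod_prod]; simp
      · rw [Measure.volume_eq_prod, Measure.prod_prod]; simp

lemma setIntegral_Ico_sq (h : ℝ × ℝ → ℝ) :
    ∫ x in Ico (0:ℝ) 1 ×ˢ Ico (0:ℝ) 1, h x = ∫ x in Icc (0:ℝ×ℝ) 1, h x :=
  MeasureTheory.setIntegral_congr_set sq_ae_eq

lemma volume_Icc_box : volume (Icc (0:ℝ×ℝ) 1) = 1 := by
  rw [Icc_box, Measure.volume_eq_prod, Measure.prod_prod, Real.volume_Icc]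
  norm_num

end glue

section density

lemma restrict_density_eq {Ω A : Set ((ℝ×ℝ)×ℝ)} {f : ℝ×ℝ → ℝ}
    (hA : MeasurableSet A) (hAΩ : A ⊆ Ω) :
    ((volume.restrict Ω).withDensity fun z => ENNReal.ofReal (f z.1)).restrict A
      = (volume.restrict A).withDensity fun z => ENNReal.ofReal (f z.1) := by
  rw [MeasureTheory.restrict_withDensity hA, Measure.restrict_restrict hA,
    Set.inter_eq_self_of_subset_left hAΩ]

lemma integral_density {Ω A : Set ((ℝ×ℝ)×ℝ)} {f : ℝ×ℝ → ℝ}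
    (hfc : Continuous f) (hfnn : ∀ x, 0 ≤ f x)
    (hA : MeasurableSet A) (hAΩ : A ⊆ Ω)
    (g : (ℝ×ℝ)×ℝ → ℝ) :
    ∫ z in A, g z ∂((volume.restrict Ω).withDensity fun z => ENNReal.ofReal (f z.1))
      = ∫ z in A, f z.1 * g z := by
  have hd : Measurable fun z : (ℝ×ℝ)×ℝ => Real.toNNReal (f z.1) :=
    (hfc.comp continuous_fst).measurable.real_toNNReal
  rw [restrict_density_eq hA hAΩ]
  have hds : (fun z : (ℝ×ℝ)×ℝ => ENNReal.ofReal (f z.1))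
      = fun z => ((Real.toNNReal (f z.1) : ℝ≥0) : ℝ≥0∞) := rfl
  rw [hds, integral_withDensity_eq_integral_smul hd]
  refine MeasureTheory.integral_congr_ae (Filter.Eventually.of_forall fun z => ?_)
  simp [NNReal.smul_def, Real.coe_toNNReal _ (hfnn z.1)]

lemma integrableOn_density {Ω A : Set ((ℝ×ℝ)×ℝ)} {f : ℝ×ℝ → ℝ}
    (hfc : Continuous f) (hfnn : ∀ x, 0 ≤ f x)
    (hA : MeasurableSet A) (hAΩ : A ⊆ Ω)
    {g : (ℝ×ℝ)×ℝ → ℝ}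
    (hg : IntegrableOn (fun z => f z.1 * g z) A volume) :
    IntegrableOn g A ((volume.restrict Ω).withDensity fun z => ENNReal.ofReal (f z.1)) := by
  have hd : Measurable fun z : (ℝ×ℝ)×ℝ => Real.toNNReal (f z.1) :=
    (hfc.comp continuous_fst).measurable.real_toNNReal
  unfold IntegrableOn
  rw [restrict_density_eq hA hAΩ]
  have hds : (fun z : (ℝ×ℝ)×ℝ => ENNReal.ofReal (f z.1))
      = fun z => ((Real.toNNReal (f z.1) : ℝ≥0) : ℝ≥0∞) := rfl
  rw [hds, integrable_withDensity_iff_integrable_smul hd]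
  apply hg.congr_fun ?_ hA
  intro z _
  simp [NNReal.smul_def, Real.coe_toNNReal _ (hfnn z.1)]

end density

lemma complete_square {t : ℝ} (ht : 0 < t) (α c w : ℝ) :
    α * t ^ (α - 1) * (c / Real.sqrt t) * w - t ^ α * w ^ 2
      ≤ α ^ 2 / 4 * t ^ (α - 3) * c ^ 2 := by
  have hsq : Real.sqrt t ^ 2 = t := Real.sq_sqrt ht.le
  have hsqpos : 0 < Real.sqrt t := Real.sqrt_pos.2 ht
  have hA2 : (α * t ^ (α - 1) / Real.sqrt t) ^ 2
      = 4 * t ^ α * (α ^ 2 / 4 * t ^ (α - 3)) := by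
    have h1 : (t ^ (α - 1)) ^ 2 = t ^ (α - 1) * t ^ (α - 1) := sq (t ^ (α-1)) ▸ by ring
    have h2 : t ^ (α - 1) * t ^ (α - 1) = t ^ (α - 1 + (α - 1)) := (Real.rpow_add ht _ _).symm
    have h3 : t ^ α * t ^ (α - 3) = t ^ (α + (α - 3)) := (Real.rpow_add ht _ _).symm
    have h4 : t ^ (α - 1 + (α - 1)) / t = t ^ (α - 1 + (α - 1)) * t⁻¹ := by ring
    have h5 : t ^ (α - 1 + (α - 1)) * t⁻¹ = t ^ (α - 1 + (α - 1) - 1) := rpow_helper1 ht _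
    have h6 : α - 1 + (α - 1) - 1 = α + (α - 3) := by ring
    rw [div_pow, hsq]
    calc (α * t ^ (α - 1)) ^ 2 / t = α ^ 2 * (t ^ (α - 1 + (α - 1)) * t⁻¹) := by
          rw [← h2]; ring
      _ = α ^ 2 * t ^ (α - 1 + (α - 1) - 1) := by rw [h5]
      _ = α ^ 2 * t ^ (α + (α - 3)) := by rw [h6]
      _ = 4 * t ^ α * (α ^ 2 / 4 * t ^ (α - 3)) := by rw [← h3]; ring
  have hpos : 0 < t ^ α := Real.rpow_pos_of_pos ht α
  have key := sq_nonneg (2 * t ^ α * w - (α * t ^ (α - 1) / Real.sqrt t) * c)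
  have lhs_eq : α * t ^ (α - 1) * (c / Real.sqrt t) * w
      = (α * t ^ (α - 1) / Real.sqrt t) * c * w := by ring
  nlinarith [key, hA2, hpos, sq_nonneg c]

/-- **Corollary to Theorem 1.2, part 1: the choice `ψ(t) = t^α`, `0 < α < 4`.**
`f` is smooth, `ℤ²`-periodic and positive; `K = −Δ(log f)/(2f)` is the Gaussian
curvature of `g = f·(dx₁²+dx₂²)`; `Ω = [0,1)² × [0,2π)` carries the measure with
density `f(x)`; `Vol = ∫_{[0,1]²} f`; `δ = μ(Ω \ M)/(2π·Vol)`. -/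
theorem conformal_torus_two_dim_bound_power
    (α : ℝ) (hα0 : 0 < α) (hα4 : α < 4)
    (f : ℝ × ℝ → ℝ) (hf : ContDiff ℝ (⊤ : ℕ∞) f) (hfpos : ∀ x, 0 < f x)
    (hfper : ∀ (x : ℝ × ℝ) (m n : ℤ), f (x.1 + m, x.2 + n) = f x)
    (K : ℝ × ℝ → ℝ)
    (hK : ∀ x, K x = -(lap2 (fun y => Real.log (f y)) x) / (2 * f x))
    (Ω : Set ((ℝ × ℝ) × ℝ))
    (hΩ : Ω = (Ico (0 : ℝ) 1 ×ˢ Ico (0 : ℝ) 1) ×ˢ Ico (0 : ℝ) (2 * π))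
    (μ : Measure ((ℝ × ℝ) × ℝ))
    (hμ : μ = (volume.restrict Ω).withDensity fun z => ENNReal.ofReal (f z.1))
    (Vol : ℝ) (hVol : Vol = ∫ x in Icc (0 : ℝ × ℝ) 1, f x)
    (M : Set ((ℝ × ℝ) × ℝ)) (hMmeas : MeasurableSet M) (hMΩ : M ⊆ Ω)
    (δ : ℝ) (hδ : δ = (μ (Ω \ M)).toReal / (2 * π * Vol))
    (ω : (ℝ × ℝ) × ℝ → ℝ) (hωmeas : Measurable ω)
    (hint1 : IntegrableOn (fun z => f z.1 ^ α * ω z ^ 2) M μ)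
    (hint2 : IntegrableOn (fun z =>
      α * f z.1 ^ (α - 1) *
        ((pd1 f z.1 * Real.cos z.2 + pd2 f z.1 * Real.sin z.2) /
          Real.sqrt (f z.1)) * ω z) M μ)
    (heq : ∫ z in M,
        (-(α * f z.1 ^ (α - 1) *
            ((pd1 f z.1 * Real.cos z.2 + pd2 f z.1 * Real.sin z.2) /
              Real.sqrt (f z.1)) * ω z)
          + f z.1 ^ α * ω z ^ 2 + f z.1 ^ α * K z.1) ∂μ ≤ 0) :
    8 * (sSup ((fun x => |K x|) '' Icc (0 : ℝ × ℝ) 1)) *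
        (sSup (f '' Icc (0 : ℝ × ℝ) 1)) ^ α * Vol * δ ≥
      α * (4 - α) *
        ∫ x in Icc (0 : ℝ × ℝ) 1, f x ^ (α - 2) * ((pd1 f x) ^ 2 + (pd2 f x) ^ 2) := by
  have hπ : (0:ℝ) < π := Real.pi_pos
  have hfc : Continuous f := hf.continuous
  have hfne : ∀ x, f x ≠ 0 := fun x => ne_of_gt (hfpos x)
  have hfnn : ∀ x, 0 ≤ f x := fun x => (hfpos x).le
  have hΩmeas : MeasurableSet Ω := by
    rw [hΩ]; exact (measurableSet_Ico.prod measurableSet_Ico).prod measurableSet_Ico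
  -- periodicity
  have hp1 : ∀ x : ℝ × ℝ, f (x + ((1:ℝ), (0:ℝ))) = f x := by
    intro x
    have h := hfper x 1 0
    push_cast at h
    have e : x + ((1:ℝ), (0:ℝ)) = (x.1 + 1, x.2 + 0) := rfl
    rw [e, add_zero]
    rw [add_zero] at h
    exact h
  have hp2 : ∀ x : ℝ × ℝ, f (x + ((0:ℝ), (1:ℝ))) = f x := by
    intro x
    have h := hfper x 0 1
    push_cast at h
    have e : x + ((0:ℝ), (1:ℝ)) = (x.1 + 0, x.2 + 1) := rfl
    rw [e, add_zero]
    rw [add_zero] at h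
    exact h
  -- abbreviations
  set I : ℝ := ∫ x in Icc (0:ℝ×ℝ) 1, f x ^ (α - 2) * ((pd1 f x) ^ 2 + (pd2 f x) ^ 2) with hI
  set CK : ℝ := sSup ((fun x => |K x|) '' Icc (0:ℝ×ℝ) 1) with hCK
  set Cf : ℝ := sSup (f '' Icc (0:ℝ×ℝ) 1) with hCfdef
  have hlog : ContDiff ℝ (⊤ : ℕ∞) (fun y => Real.log (f y)) := hf.log hfne
  have hKc : Continuous K := by
    have hKeq : K = fun x => -(lap2 (fun y => Real.log (f y)) x) / (2 * f x) := funext hK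
    rw [hKeq]
    have hl : Continuous (lap2 (fun y => Real.log (f y))) := by
      unfold lap2
      exact (contDiff_pd1 (contDiff_pd1 hlog)).continuous.add
        (contDiff_pd2 (contDiff_pd2 hlog)).continuous
    exact hl.neg.div (continuous_const.mul hfc) fun x => mul_ne_zero two_ne_zero (hfne x)
  -- sup bounds
  have mem0 : (0:ℝ×ℝ) ∈ Icc (0:ℝ×ℝ) 1 := by
    constructor <;> exact le_of_eq rfl |>.trans (by norm_num [Prod.le_def])
  have hKle : ∀ x ∈ Icc (0:ℝ×ℝ) 1, |K x| ≤ CK := fun x hx =>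
    le_csSup (isCompact_Icc.image_of_continuousOn hKc.abs.continuousOn).bddAbove ⟨x, hx, rfl⟩
  have hfle : ∀ x ∈ Icc (0:ℝ×ℝ) 1, f x ≤ Cf := fun x hx =>
    le_csSup (isCompact_Icc.image_of_continuousOn hfc.continuousOn).bddAbove ⟨x, hx, rfl⟩
  have hCf0 : 0 < Cf := lt_of_lt_of_le (hfpos 0) (hfle 0 mem0)
  have hCK0 : 0 ≤ CK := le_trans (abs_nonneg _) (hKle 0 mem0)
  have hz1 : ∀ z ∈ Ω, z.1 ∈ Icc (0:ℝ×ℝ) 1 := by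
    intro z hz
    rw [hΩ] at hz
    rw [Icc_box]
    exact ⟨Ico_subset_Icc_self hz.1.1, Ico_subset_Icc_self hz.1.2⟩
  -- compactness / integrability infrastructure
  have hΩcpt : IsCompact ((Icc (0:ℝ) 1 ×ˢ Icc (0:ℝ) 1) ×ˢ Icc (0:ℝ) (2*π)) :=
    (isCompact_Icc.prod isCompact_Icc).prod isCompact_Icc
  have hΩsubc : Ω ⊆ (Icc (0:ℝ) 1 ×ˢ Icc (0:ℝ) 1) ×ˢ Icc (0:ℝ) (2*π) := by
    rw [hΩ]
    exact Set.prod_mono (Set.prod_mono Ico_subset_Icc_self Ico_subset_Icc_self)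
      Ico_subset_Icc_self
  have hIntVol : ∀ {h : (ℝ×ℝ)×ℝ → ℝ}, Continuous h → IntegrableOn h Ω volume :=
    fun hc => (hc.continuousOn.integrableOn_compact hΩcpt).mono_set hΩsubc
  have hIntμ : ∀ {h : (ℝ×ℝ)×ℝ → ℝ}, Continuous h → IntegrableOn h Ω μ := by
    intro h hc
    rw [hμ]
    exact integrableOn_density hfc hfnn hΩmeas subset_rfl
      (hIntVol ((hfc.comp continuous_fst).mul hc))
  -- the two key functions
  set q : (ℝ×ℝ)×ℝ → ℝ := fun z =>
    α ^ 2 / 4 * f z.1 ^ (α - 3) *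
      (pd1 f z.1 * Real.cos z.2 + pd2 f z.1 * Real.sin z.2) ^ 2 with hqdef
  set kf : (ℝ×ℝ)×ℝ → ℝ := fun z => f z.1 ^ α * K z.1 with hkfdef
  have hpd1c : Continuous (pd1 f) := (contDiff_pd1 hf).continuous
  have hpd2c : Continuous (pd2 f) := (contDiff_pd2 hf).continuous
  have hqc : Continuous q := by
    apply Continuous.mul
    · exact continuous_const.mul
        (((hf.rpow_const_of_ne hfne).continuous).comp continuous_fst)
    · exact (((hpd1c.comp continuous_fst).mul (Real.continuous_cos.comp continuous_snd)).add
        ((hpd2c.comp continuous_fst).mul (Real.continuous_sin.comp continuous_snd))).pow 2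
  have hkfc : Continuous kf :=
    (((hf.rpow_const_of_ne hfne).continuous).comp continuous_fst).mul (hKc.comp continuous_fst)
  have hIntq : IntegrableOn q Ω μ := hIntμ hqc
  have hIntkf : IntegrableOn kf Ω μ := hIntμ hkfc
  have hIntkfM : IntegrableOn kf M μ := hIntkf.mono_set hMΩ
  have hIntqM : IntegrableOn q M μ := hIntq.mono_set hMΩ
  -- step 1 : from the hypothesis heq
  have step1 : ∫ z in M, kf z ∂μ ≤ ∫ z in M, q z ∂μ := by
    have e1 : ∀ z, (-(α * f z.1 ^ (α - 1) *
            ((pd1 f z.1 * Real.cos z.2 + pd2 f z.1 * Real.sin z.2) /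
              Real.sqrt (f z.1)) * ω z)
          + f z.1 ^ α * ω z ^ 2 + f z.1 ^ α * K z.1)
        = kf z - ((α * f z.1 ^ (α - 1) *
            ((pd1 f z.1 * Real.cos z.2 + pd2 f z.1 * Real.sin z.2) /
              Real.sqrt (f z.1)) * ω z) - f z.1 ^ α * ω z ^ 2) := by
      intro z; simp only [hkfdef]; ring
    rw [MeasureTheory.integral_congr_ae (Filter.Eventually.of_forall e1)] at heq
    have hsplit := MeasureTheory.integral_sub hIntkfM (hint2.sub hint1)
    simp only [Pi.sub_apply] at hsplit
    rw [hsplit, sub_nonpos] at heq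
    refine le_trans heq (MeasureTheory.setIntegral_mono_on
      ?_ hIntqM hMmeas fun z _ => ?_)
    · have h2 := hint2.sub hint1
      exact h2
    · exact complete_square (hfpos z.1) α _ (ω z)
  -- step 2 : M-integral of q bounded by Ω-integral
  have hqnn : ∀ z, 0 ≤ q z := by
    intro z
    have := Real.rpow_pos_of_pos (hfpos z.1) (α - 3)
    positivity
  have step2 : ∫ z in M, q z ∂μ ≤ ∫ z in Ω, q z ∂μ :=
    MeasureTheory.setIntegral_mono_set hIntq
      (Filter.Eventually.of_forall hqnn) (HasSubset.Subset.eventuallyLE hMΩ)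
  -- E2 : the Ω-integral of q
  have hboxmeas : MeasurableSet ((Ico (0:ℝ) 1 ×ˢ Ico (0:ℝ) 1) ×ˢ Ico (0:ℝ) (2*π)) :=
    (measurableSet_Ico.prod measurableSet_Ico).prod measurableSet_Ico
  set g1 : ℝ×ℝ → ℝ := fun x => α^2/4 * f x ^ (α-2) * (pd1 f x)^2 with hg1
  set g3 : ℝ×ℝ → ℝ := fun x => α^2/4 * f x ^ (α-2) * (pd2 f x)^2 with hg3
  set g2 : ℝ×ℝ → ℝ := fun x => α^2/4 * f x ^ (α-2) * (2 * pd1 f x * pd2 f x) with hg2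
  have hg1c : Continuous g1 :=
    (continuous_const.mul (hf.rpow_const_of_ne hfne).continuous).mul (hpd1c.pow 2)
  have hg3c : Continuous g3 :=
    (continuous_const.mul (hf.rpow_const_of_ne hfne).continuous).mul (hpd2c.pow 2)
  have hg2c : Continuous g2 :=
    (continuous_const.mul (hf.rpow_const_of_ne hfne).continuous).mul
      ((continuous_const.mul hpd1c).mul hpd2c)
  have hE2 : ∫ z in Ω, q z ∂μ = π * (α^2/4) * I := by
    rw [hμ, integral_density hfc hfnn hΩmeas subset_rfl]
    have hfq : ∀ z : (ℝ×ℝ)×ℝ, f z.1 * q z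
        = g1 z.1 * Real.cos z.2 ^ 2 + g3 z.1 * Real.sin z.2 ^ 2
          + g2 z.1 * (Real.sin z.2 * Real.cos z.2) := by
      intro z
      have hr : f z.1 * f z.1 ^ (α - 3) = f z.1 ^ (α - 2) := by
        rw [show (α - 2) = (α - 3) + 1 by ring, Real.rpow_add_one (hfne z.1)]
        ring
      have expand : f z.1 * q z
          = (f z.1 * f z.1 ^ (α-3)) * (α^2/4)
            * (pd1 f z.1 * Real.cos z.2 + pd2 f z.1 * Real.sin z.2) ^ 2 := by
        simp only [hqdef]; ring
      rw [expand, hr]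
      simp only [hg1, hg2, hg3]
      ring
    rw [hΩ, Measure.volume_eq_prod]
    rw [MeasureTheory.setIntegral_congr_fun hboxmeas (fun z _ => hfq z)]
    have i1 : IntegrableOn (fun z : (ℝ×ℝ)×ℝ => g1 z.1 * Real.cos z.2 ^ 2)
        ((Ico (0:ℝ) 1 ×ˢ Ico (0:ℝ) 1) ×ˢ Ico (0:ℝ) (2*π)) (volume.prod volume) := by
      rw [← Measure.volume_eq_prod, ← hΩ]
      exact hIntVol ((hg1c.comp continuous_fst).mul
        ((Real.continuous_cos.comp continuous_snd).pow 2))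
    have i3 : IntegrableOn (fun z : (ℝ×ℝ)×ℝ => g3 z.1 * Real.sin z.2 ^ 2)
        ((Ico (0:ℝ) 1 ×ˢ Ico (0:ℝ) 1) ×ˢ Ico (0:ℝ) (2*π)) (volume.prod volume) := by
      rw [← Measure.volume_eq_prod, ← hΩ]
      exact hIntVol ((hg3c.comp continuous_fst).mul
        ((Real.continuous_sin.comp continuous_snd).pow 2))
    have i2 : IntegrableOn (fun z : (ℝ×ℝ)×ℝ => g2 z.1 * (Real.sin z.2 * Real.cos z.2))
        ((Ico (0:ℝ) 1 ×ˢ Ico (0:ℝ) 1) ×ˢ Ico (0:ℝ) (2*π)) (volume.prod volume) := by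
      rw [← Measure.volume_eq_prod, ← hΩ]
      exact hIntVol ((hg2c.comp continuous_fst).mul
        ((Real.continuous_sin.comp continuous_snd).mul
          (Real.continuous_cos.comp continuous_snd)))
    have i13 : IntegrableOn (fun z : (ℝ×ℝ)×ℝ =>
        g1 z.1 * Real.cos z.2 ^ 2 + g3 z.1 * Real.sin z.2 ^ 2)
        ((Ico (0:ℝ) 1 ×ˢ Ico (0:ℝ) 1) ×ˢ Ico (0:ℝ) (2*π)) (volume.prod volume) := i1.add i3
    rw [MeasureTheory.integral_add i13 i2, MeasureTheory.integral_add i1 i3]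
    rw [MeasureTheory.setIntegral_prod_mul g1 (fun φ => Real.cos φ ^ 2),
      MeasureTheory.setIntegral_prod_mul g3 (fun φ => Real.sin φ ^ 2),
      MeasureTheory.setIntegral_prod_mul g2 (fun φ => Real.sin φ * Real.cos φ)]
    rw [phi_cos_sq, phi_sin_sq, phi_sin_cos, setIntegral_Ico_sq g1, setIntegral_Ico_sq g3]
    have intg1 : IntegrableOn g1 (Icc (0:ℝ×ℝ) 1) volume :=
      hg1c.continuousOn.integrableOn_compact isCompact_Icc
    have intg3 : IntegrableOn g3 (Icc (0:ℝ×ℝ) 1) volume :=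
      hg3c.continuousOn.integrableOn_compact isCompact_Icc
    have recomb : (∫ x in Icc (0:ℝ×ℝ) 1, g1 x) + (∫ x in Icc (0:ℝ×ℝ) 1, g3 x)
        = α^2/4 * I := by
      rw [hI, ← MeasureTheory.integral_const_mul, ← MeasureTheory.integral_add intg1 intg3]
      refine MeasureTheory.setIntegral_congr_fun measurableSet_Icc fun x _ => ?_
      simp only [hg1, hg3]
      ring
    linear_combination π * recomb
  -- E1 : the Ω-integral of kf
  have hE1 : ∫ z in Ω, kf z ∂μ = π * α * I := by
    rw [hμ, integral_density hfc hfnn hΩmeas subset_rfl]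
    have hfkf : ∀ z : (ℝ×ℝ)×ℝ, f z.1 * kf z
        = (fun x => f x ^ α * K x * f x) z.1 * (fun _ : ℝ => (1:ℝ)) z.2 := by
      intro z; simp only [hkfdef]; ring
    rw [hΩ, Measure.volume_eq_prod,
      MeasureTheory.setIntegral_congr_fun hboxmeas (fun z _ => hfkf z),
      MeasureTheory.setIntegral_prod_mul (fun x => f x ^ α * K x * f x) (fun _ : ℝ => (1:ℝ))]
    rw [phi_one, setIntegral_Ico_sq (fun x => f x ^ α * K x * f x),
      curvature_integral hf hfpos hp1 hp2 hK α, hI]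
    ring
  -- E3 : finiteness and bound on the complement
  have hμfin : μ (Ω \ M) < ⊤ := by
    refine lt_of_le_of_lt (measure_mono diff_subset) ?_
    rw [hμ, MeasureTheory.withDensity_apply _ hΩmeas, Measure.restrict_restrict hΩmeas,
      Set.inter_self]
    calc ∫⁻ z in Ω, ENNReal.ofReal (f z.1) ∂volume
        ≤ ∫⁻ _ in Ω, ENNReal.ofReal Cf ∂volume := by
          apply MeasureTheory.setLIntegral_mono measurable_const
          exact fun z hz => ENNReal.ofReal_le_ofReal (hfle z.1 (hz1 z hz))
      _ = ENNReal.ofReal Cf * volume Ω := MeasureTheory.setLIntegral_const _ _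
      _ < ⊤ := ENNReal.mul_lt_top ENNReal.ofReal_lt_top
          (lt_of_le_of_lt (measure_mono hΩsubc) hΩcpt.measure_lt_top)
  have hbound : |∫ z in Ω \ M, kf z ∂μ| ≤ CK * Cf ^ α * (μ (Ω \ M)).toReal := by
    have hC : ∀ z ∈ Ω \ M, ‖kf z‖ ≤ CK * Cf ^ α := by
      intro z hz
      have hzI : z.1 ∈ Icc (0:ℝ×ℝ) 1 := hz1 z hz.1
      have h1 : ‖kf z‖ = f z.1 ^ α * |K z.1| := by
        simp only [hkfdef, Real.norm_eq_abs, abs_mul,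
          abs_of_pos (Real.rpow_pos_of_pos (hfpos z.1) α)]
      rw [h1, mul_comm CK (Cf ^ α)]
      exact mul_le_mul (Real.rpow_le_rpow (hfnn z.1) (hfle z.1 hzI) hα0.le)
        (hKle z.1 hzI) (abs_nonneg _) (Real.rpow_nonneg hCf0.le α)
    have := MeasureTheory.norm_setIntegral_le_of_norm_le_const (μ := μ) hμfin hC
    simpa [Real.norm_eq_abs, measureReal_def] using this
  have hdiff : ∫ z in Ω \ M, kf z ∂μ = (∫ z in Ω, kf z ∂μ) - ∫ z in M, kf z ∂μ :=
    MeasureTheory.integral_diff hMmeas hIntkf hMΩ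
  -- positivity of Vol
  have hVolpos : 0 < Vol := by
    obtain ⟨x₀, hx₀, hmin⟩ :=
      isCompact_Icc.exists_isMinOn ⟨0, mem0⟩ hfc.continuousOn
    have hconst : IntegrableOn (fun _ : ℝ×ℝ => f x₀) (Icc (0:ℝ×ℝ) 1) volume := by
      exact MeasureTheory.integrableOn_const (by rw [volume_Icc_box]; exact ENNReal.one_ne_top)
    have hmono : ∫ _x in Icc (0:ℝ×ℝ) 1, f x₀ ≤ ∫ x in Icc (0:ℝ×ℝ) 1, f x :=
      MeasureTheory.setIntegral_mono_on hconst
        (hfc.continuousOn.integrableOn_compact isCompact_Icc) measurableSet_Icc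
        fun x hx => hmin hx
    rw [MeasureTheory.setIntegral_const, measureReal_def, volume_Icc_box] at hmono
    simp only [ENNReal.toReal_one, one_smul] at hmono
    rw [hVol]
    exact lt_of_lt_of_le (hfpos x₀) hmono
  -- δ relation
  have hmrel : (μ (Ω \ M)).toReal = 2 * π * Vol * δ := by
    have h2πV : 2 * π * Vol ≠ 0 := by positivity
    rw [hδ]
    field_simp
  -- final arithmetic
  have main : π * α * I ≤ π * (α^2/4) * I + CK * Cf ^ α * (2 * π * Vol * δ) := by
    have h1 : π * α * I = (∫ z in M, kf z ∂μ) + ∫ z in Ω \ M, kf z ∂μ := by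
      rw [hdiff, ← hE1]; ring
    have h2 : ∫ z in Ω \ M, kf z ∂μ ≤ CK * Cf ^ α * (2 * π * Vol * δ) := by
      rw [← hmrel]
      exact le_trans (le_abs_self _) hbound
    have h3 : ∫ z in M, kf z ∂μ ≤ π * (α^2/4) * I :=
      le_trans step1 (step2.trans_eq hE2)
    linarith [h1, h2, h3]
  have h4 : π * (α * (4 - α) * I) ≤ π * (8 * CK * Cf ^ α * Vol * δ) := by nlinarith [main]
  have h5 := (mul_le_mul_iff_right₀ hπ).1 h4
  linarith [h5]
end

section
/- For every real k > 0, ∫₀^π arctan(sin φ / k)·sin φ dφ = π·(√(k² + 1) − k). -/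
/-!
Integrating by parts against `-cos φ` turns the integrand into
`k cos² φ / (k² + sin² φ) = k (k² + 1) / (k² + sin² φ) - k`, and
`k² + sin² φ = a² cos² φ + b² sin² φ` for `a = k`, `b = √(k² + 1)`, so everything reduces to
the classical `∫₀^π dφ / (a² cos² φ + b² sin² φ) = π / (a b)`.
-/

open Real

theorem mul_cos_sq_add_mul_sin_sq_pos {a b : ℝ} (ha : 0 < a) (hb : 0 < b) (φ : ℝ) :
    0 < a * cos φ ^ 2 + b * sin φ ^ 2 := by
  rcases (sq_nonneg (cos φ)).lt_or_eq with hc | hc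
  · linarith [mul_pos ha hc, mul_nonneg hb.le (sq_nonneg (sin φ))]
  · nlinarith [sin_sq_add_cos_sq φ]

theorem continuous_div_mul_cos_sq_add_mul_sin_sq (c : ℝ) {a b : ℝ} (ha : 0 < a) (hb : 0 < b) :
    Continuous fun φ => c / (a * cos φ ^ 2 + b * sin φ ^ 2) :=
  continuous_const.div (by fun_prop) fun φ => (mul_cos_sq_add_mul_sin_sq_pos ha hb φ).ne'

/-- The function differentiated here is the branch of `φ ↦ arctan ((b / a) * tan φ)` that is
continuous across the poles of `tan`. -/
theorem hasDerivAt_add_arctan_sin_mul_cos_div {a b : ℝ} (ha : 0 < a) (hb : 0 < b) (φ : ℝ) :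
    HasDerivAt (fun x => x + arctan ((b - a) * sin x * cos x / (a * cos x ^ 2 + b * sin x ^ 2)))
      (a * b / (a ^ 2 * cos φ ^ 2 + b ^ 2 * sin φ ^ 2)) φ := by
  have hD := (mul_cos_sq_add_mul_sin_sq_pos ha hb φ).ne'
  have hE := (mul_cos_sq_add_mul_sin_sq_pos (pow_pos ha 2) (pow_pos hb 2) φ).ne'
  have hnum : HasDerivAt (fun x => (b - a) * sin x * cos x)
      ((b - a) * cos φ * cos φ + (b - a) * sin φ * -sin φ) φ :=
    ((hasDerivAt_sin φ).const_mul (b - a)).fun_mul (hasDerivAt_cos φ)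
  have hden : HasDerivAt (fun x => a * cos x ^ 2 + b * sin x ^ 2)
      (a * (2 * cos φ * -sin φ) + b * (2 * sin φ * cos φ)) φ := by
    refine ((((hasDerivAt_cos φ).fun_pow 2).const_mul a).fun_add
      (((hasDerivAt_sin φ).fun_pow 2).const_mul b)).congr_deriv ?_
    norm_num
  refine ((hasDerivAt_id' φ).fun_add (hnum.fun_div hden hD).arctan).congr_deriv ?_
  field_simp
  linear_combination a * b * (sin φ ^ 2 + cos φ ^ 2) * (a ^ 2 * cos φ ^ 2 + b ^ 2 * sin φ ^ 2) *
    sin_sq_add_cos_sq φ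

theorem integral_mul_div_sq_mul_cos_sq_add_sq_mul_sin_sq {a b : ℝ} (ha : 0 < a) (hb : 0 < b) :
    ∫ φ in (0 : ℝ)..π, a * b / (a ^ 2 * cos φ ^ 2 + b ^ 2 * sin φ ^ 2) = π := by
  rw [intervalIntegral.integral_eq_sub_of_hasDerivAt
    (fun φ _ => hasDerivAt_add_arctan_sin_mul_cos_div ha hb φ)
    ((continuous_div_mul_cos_sq_add_mul_sin_sq _ (pow_pos ha 2) (pow_pos hb 2)).intervalIntegrable
      _ _)]
  simp

theorem integral_arctan_sin_div_mul_sin_eq {k : ℝ} (hk : k ≠ 0) :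
    ∫ φ in (0 : ℝ)..π, arctan (sin φ / k) * sin φ =
      ∫ φ in (0 : ℝ)..π, k * cos φ ^ 2 / (k ^ 2 + sin φ ^ 2) := by
  have hu (φ : ℝ) :
      HasDerivAt (fun x => arctan (sin x / k)) (k * cos φ / (k ^ 2 + sin φ ^ 2)) φ := by
    refine ((hasDerivAt_sin φ).div_const k).arctan.congr_deriv ?_
    field_simp
  have hu' : Continuous fun φ => k * cos φ / (k ^ 2 + sin φ ^ 2) :=
    (by fun_prop : Continuous fun φ => k * cos φ).div (by fun_prop) fun φ => by positivity
  rw [intervalIntegral.integral_mul_deriv_eq_deriv_mul (fun φ _ => hu φ)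
    (fun φ _ => (hasDerivAt_cos φ).fun_neg.congr_deriv (neg_neg (sin φ)))
    (hu'.intervalIntegrable _ _) (continuous_sin.intervalIntegrable _ _)]
  simp only [sin_pi, sin_zero, zero_div, arctan_zero, zero_mul, sub_zero, zero_sub,
    ← intervalIntegral.integral_neg]
  congr with φ
  ring

/-- The definite-integral identity used for the hemisphere billiard bound:
`∫₀^π arctan(sin φ / k)·sin φ dφ = π·(√(k² + 1) − k)` for `k > 0`. -/
theorem integral_arctan_sin_div (k : ℝ) (hk : 0 < k) :
    ∫ φ in (0 : ℝ)..π, Real.arctan (Real.sin φ / k) * Real.sin φ =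
      π * (Real.sqrt (k ^ 2 + 1) - k) := by
  set r := √(k ^ 2 + 1)
  have hr : 0 < r := by positivity
  have hr2 : r ^ 2 = k ^ 2 + 1 := sq_sqrt (by positivity)
  have hintegrand (φ : ℝ) : k * cos φ ^ 2 / (k ^ 2 + sin φ ^ 2) =
      r * (k * r / (k ^ 2 * cos φ ^ 2 + r ^ 2 * sin φ ^ 2)) - k := by
    rw [show k ^ 2 * cos φ ^ 2 + r ^ 2 * sin φ ^ 2 = k ^ 2 + sin φ ^ 2 by
      linear_combination k ^ 2 * cos_sq_add_sin_sq φ + sin φ ^ 2 * hr2]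
    field_simp
    linear_combination sin_sq_add_cos_sq φ - hr2
  calc _ = ∫ φ in (0 : ℝ)..π, k * cos φ ^ 2 / (k ^ 2 + sin φ ^ 2) :=
        integral_arctan_sin_div_mul_sin_eq hk.ne'
    _ = ∫ φ in (0 : ℝ)..π, (r * (k * r / (k ^ 2 * cos φ ^ 2 + r ^ 2 * sin φ ^ 2)) - k) := by
        simp_rw [hintegrand]
    _ = π * (r - k) := by
        have hint := (continuous_div_mul_cos_sq_add_mul_sin_sq (k * r) (pow_pos hk 2)
          (pow_pos hr 2)).intervalIntegrable (μ := MeasureTheory.volume) 0 π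
        rw [intervalIntegral.integral_sub (hint.const_mul r) intervalIntegrable_const,
          intervalIntegral.integral_const_mul,
          integral_mul_div_sq_mul_cos_sq_add_sq_mul_sin_sq hk hr,
          intervalIntegral.integral_const, smul_eq_mul]
        ring
end

section
/- For every real k > 1, ∫₀^π artanh(sin φ / k)·sin φ dφ = π·(k − √(k² − 1)). -/
/-!
Integrating by parts against `-cos φ` turns the integrand into
`k cos² φ / (k² - sin² φ) = k - k (k² - 1) / (k² - sin² φ)`. With `c = √(k² - 1) / k`, a primitive
of `1 / (k² - sin² φ)` is `arctan (c tan φ) / (k √(k² - 1))`; its continuous branch increases by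
`π / (k √(k² - 1))` over `[0, π]`.
-/

open Real

/-- The inverse hyperbolic tangent. -/
noncomputable def Real.artanhLog (x : ℝ) : ℝ := (1 / 2) * Real.log ((1 + x) / (1 - x))

open Set intervalIntegral

namespace Real

theorem artanhLog_zero : artanhLog 0 = 0 := by simp [artanhLog]

theorem hasDerivAt_artanhLog {x : ℝ} (hx : x ∈ Ioo (-1 : ℝ) 1) :
    HasDerivAt artanhLog (1 - x ^ 2)⁻¹ x := by
  obtain ⟨hx₁, hx₂⟩ := hx
  have hp : 0 < 1 + x := by linarith
  have hm : 0 < 1 - x := by linarith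
  have hq := ((((hasDerivAt_id' x).const_add 1).fun_div ((hasDerivAt_id' x).const_sub 1)
    hm.ne').log (div_pos hp hm).ne').const_mul (1 / 2 : ℝ)
  refine hq.congr_deriv ?_
  rw [show 1 - x ^ 2 = (1 + x) * (1 - x) by ring]
  field_simp
  ring

end Real

theorem sin_div_mem_Ioo {k : ℝ} (hk : 1 < k) (φ : ℝ) : sin φ / k ∈ Ioo (-1 : ℝ) 1 := by
  have hk₀ : 0 < k := by linarith
  constructor
  · rw [lt_div_iff₀ hk₀]; linarith [neg_one_le_sin φ]
  · rw [div_lt_iff₀ hk₀]; linarith [sin_le_one φ]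

/-- A continuous branch of `y ↦ arctan (c * tan y)`: by the subtraction formula for `tan`, the
`arctan` term is `arctan (c * tan y) - y` for `|y| < π / 2`. -/
noncomputable def arctanMulTanBranch (c y : ℝ) : ℝ :=
  y + arctan ((c - 1) * sin y * cos y / (cos y ^ 2 + c * sin y ^ 2))

theorem cos_sq_add_mul_sin_sq_pos {c : ℝ} (hc : 0 < c) (y : ℝ) :
    0 < cos y ^ 2 + c * sin y ^ 2 := by
  rcases eq_or_ne (sin y) 0 with h | h
  · have := sin_sq_add_cos_sq y
    rw [h] at this ⊢; nlinarith
  · positivity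

theorem hasDerivAt_arctanMulTanBranch {c : ℝ} (hc : 0 < c) (y : ℝ) :
    HasDerivAt (arctanMulTanBranch c) (c / (cos y ^ 2 + c ^ 2 * sin y ^ 2)) y := by
  have hsc := sin_sq_add_cos_sq y
  have hD := cos_sq_add_mul_sin_sq_pos hc y
  have hE := cos_sq_add_mul_sin_sq_pos (pow_pos hc 2) y
  have hN : HasDerivAt (fun y => (c - 1) * sin y * cos y)
      ((c - 1) * (cos y ^ 2 - sin y ^ 2)) y := by
    refine (((hasDerivAt_sin y).const_mul (c - 1)).fun_mul (hasDerivAt_cos y)).congr_deriv ?_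
    ring
  have hD' : HasDerivAt (fun y => cos y ^ 2 + c * sin y ^ 2)
      (2 * (c - 1) * sin y * cos y) y := by
    refine (((hasDerivAt_cos y).fun_pow 2).fun_add
      (((hasDerivAt_sin y).fun_pow 2).const_mul c)).congr_deriv ?_
    push_cast
    ring
  have hq : HasDerivAt (fun y => (c - 1) * sin y * cos y / (cos y ^ 2 + c * sin y ^ 2))
      ((c - 1) * (cos y ^ 2 - c * sin y ^ 2) / (cos y ^ 2 + c * sin y ^ 2) ^ 2) y := by
    refine (hN.fun_div hD' hD.ne').congr_deriv ?_
    rw [div_left_inj' (pow_ne_zero 2 hD.ne')]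
    linear_combination (c - 1) * (cos y ^ 2 - c * sin y ^ 2) * hsc
  have hsum : (cos y ^ 2 + c * sin y ^ 2) ^ 2 + ((c - 1) * sin y * cos y) ^ 2 =
      cos y ^ 2 + c ^ 2 * sin y ^ 2 := by
    linear_combination (cos y ^ 2 + c ^ 2 * sin y ^ 2) * hsc
  refine ((hasDerivAt_id y).fun_add hq.arctan).congr_deriv ?_
  field_simp
  linear_combination (cos y ^ 2 + c ^ 2 * sin y ^ 2 - c) * hsum
    + c * (cos y ^ 2 + c ^ 2 * sin y ^ 2) * hsc

theorem sq_sub_sin_sq_pos {k : ℝ} (hk : 1 < k) (φ : ℝ) : 0 < k ^ 2 - sin φ ^ 2 := by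
  nlinarith [sin_sq_le_one φ]

theorem continuous_inv_sq_sub_sin_sq {k : ℝ} (hk : 1 < k) :
    Continuous fun φ => (k ^ 2 - sin φ ^ 2)⁻¹ :=
  (by fun_prop : Continuous fun φ => k ^ 2 - sin φ ^ 2).inv₀ fun φ => (sq_sub_sin_sq_pos hk φ).ne'

theorem integral_inv_sq_sub_sin_sq {k : ℝ} (hk : 1 < k) :
    ∫ φ in (0 : ℝ)..π, (k ^ 2 - sin φ ^ 2)⁻¹ = π / (k * √(k ^ 2 - 1)) := by
  have hk₀ : 0 < k := by linarith
  set s := √(k ^ 2 - 1)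
  have hs : 0 < s := sqrt_pos.mpr (by nlinarith)
  have hs2 : s ^ 2 = k ^ 2 - 1 := sq_sqrt (by nlinarith)
  have hderiv (φ : ℝ) : HasDerivAt (fun φ => arctanMulTanBranch (s / k) φ / (k * s))
      (k ^ 2 - sin φ ^ 2)⁻¹ φ := by
    refine ((hasDerivAt_arctanMulTanBranch (div_pos hs hk₀) φ).div_const _).congr_deriv ?_
    have hne := (sq_sub_sin_sq_pos hk φ).ne'
    have hden : k ^ 2 * cos φ ^ 2 + (k ^ 2 - 1) * sin φ ^ 2 = k ^ 2 - sin φ ^ 2 := by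
      linear_combination k ^ 2 * cos_sq_add_sin_sq φ
    field_simp
    rw [hs2, hden, div_self hne]
  rw [integral_eq_sub_of_hasDerivAt (fun φ _ => hderiv φ)
    ((continuous_inv_sq_sub_sin_sq hk).intervalIntegrable _ _)]
  simp [arctanMulTanBranch]

theorem integral_artanhLog_sin_div_mul_sin {k : ℝ} (hk : 1 < k) :
    ∫ φ in (0 : ℝ)..π, artanhLog (sin φ / k) * sin φ =
      ∫ φ in (0 : ℝ)..π, k * cos φ ^ 2 / (k ^ 2 - sin φ ^ 2) := by
  have hu (φ : ℝ) :
      HasDerivAt (fun φ => artanhLog (sin φ / k)) (k * cos φ / (k ^ 2 - sin φ ^ 2)) φ := by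
    refine ((hasDerivAt_artanhLog (sin_div_mem_Ioo hk φ)).comp φ
      ((hasDerivAt_sin φ).div_const k)).congr_deriv ?_
    have := (sq_sub_sin_sq_pos hk φ).ne'
    have : k ≠ 0 := by positivity
    field_simp
  have hv (φ : ℝ) : HasDerivAt (fun φ => -cos φ) (sin φ) φ := by
    simpa using (hasDerivAt_cos φ).fun_neg
  have hu' : Continuous fun φ => k * cos φ / (k ^ 2 - sin φ ^ 2) :=
    (by fun_prop : Continuous fun φ => k * cos φ).div (by fun_prop)
      fun φ => (sq_sub_sin_sq_pos hk φ).ne'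
  rw [integral_mul_deriv_eq_deriv_mul (fun φ _ => hu φ) (fun φ _ => hv φ)
    (hu'.intervalIntegrable _ _) (continuous_sin.intervalIntegrable _ _)]
  simp only [sin_pi, zero_div, artanhLog_zero, cos_pi, neg_neg, mul_one, sin_zero, cos_zero,
    mul_neg, neg_zero, sub_self, zero_sub, ← integral_neg]
  exact integral_congr fun φ _ => by ring

/-- The definite-integral identity used for the hyperbolic billiard bound:
`∫₀^π artanh(sin φ / k)·sin φ dφ = π·(k − √(k² − 1))` for `k > 1`. -/
theorem integral_artanh_sin_div (k : ℝ) (hk : 1 < k) :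
    ∫ φ in (0 : ℝ)..π, Real.artanhLog (Real.sin φ / k) * Real.sin φ =
      π * (k - Real.sqrt (k ^ 2 - 1)) := by
  have hk₀ : 0 < k := by linarith
  have hs : 0 < √(k ^ 2 - 1) := sqrt_pos.mpr (by nlinarith)
  calc ∫ φ in (0 : ℝ)..π, artanhLog (sin φ / k) * sin φ
      = ∫ φ in (0 : ℝ)..π, k * cos φ ^ 2 / (k ^ 2 - sin φ ^ 2) :=
        integral_artanhLog_sin_div_mul_sin hk
    _ = ∫ φ in (0 : ℝ)..π, (k - k * (k ^ 2 - 1) * (k ^ 2 - sin φ ^ 2)⁻¹) :=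
        integral_congr fun φ _ => by
          have := (sq_sub_sin_sq_pos hk φ).ne'
          field_simp
          linear_combination cos_sq_add_sin_sq φ
    _ = π * k - k * (k ^ 2 - 1) * (π / (k * √(k ^ 2 - 1))) := by
      rw [integral_sub intervalIntegrable_const
        (((continuous_inv_sq_sub_sin_sq hk).intervalIntegrable _ _).const_mul _),
        integral_const_mul, integral_inv_sq_sub_sin_sq hk]
      simp
    _ = π * (k - √(k ^ 2 - 1)) := by
      field_simp
      linear_combination sq_sqrt (by nlinarith : (0 : ℝ) ≤ k ^ 2 - 1)
end

section
/- Let P > 0 and let k : [0,P] → ℝ be Lebesgue-integrable with k(x) ≥ 1 for almost every x ∈ [0,P]. Then (∫₀^P √(k(x)² − 1) dx)² ≤ (∫₀^P k(x) dx)² − P². -/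
/-!
Write `√(k² - 1) = √(k - 1) · √(k + 1)`, both factors being real since `k ≥ 1`.
Cauchy–Schwarz bounds the square of its integral by `(∫ (k - 1)) (∫ (k + 1))`,
which is `(∫ k)² - P²` because the constant `1` integrates to the length `P`.
-/

open MeasureTheory Real Set

section CauchySchwarz

variable {α : Type*} [MeasurableSpace α] {μ : Measure α} {f g : α → ℝ}

theorem memLp_two_sqrt (hf : Integrable f μ) (hf0 : 0 ≤ᵐ[μ] f) :
    MemLp (fun x => √(f x)) 2 μ := by
  refine (memLp_two_iff_integrable_sq
    (continuous_sqrt.comp_aestronglyMeasurable hf.aestronglyMeasurable)).2 (hf.congr ?_)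
  filter_upwards [hf0] with x hx
  exact (sq_sqrt hx).symm

theorem integral_sqrt_rpow_two (hf0 : 0 ≤ᵐ[μ] f) :
    ∫ x, √(f x) ^ (2 : ℝ) ∂μ = ∫ x, f x ∂μ := by
  refine integral_congr_ae ?_
  filter_upwards [hf0] with x hx
  rw [rpow_two, sq_sqrt hx]

theorem sq_integral_sqrt_mul_le (hf : Integrable f μ) (hg : Integrable g μ)
    (hf0 : 0 ≤ᵐ[μ] f) (hg0 : 0 ≤ᵐ[μ] g) :
    (∫ x, √(f x * g x) ∂μ) ^ 2 ≤ (∫ x, f x ∂μ) * ∫ x, g x ∂μ := by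
  have holder := integral_mul_le_Lp_mul_Lq_of_nonneg (μ := μ) HolderConjugate.two_two
    (Filter.Eventually.of_forall fun x => sqrt_nonneg (f x))
    (Filter.Eventually.of_forall fun x => sqrt_nonneg (g x))
    (by simpa using memLp_two_sqrt hf hf0) (by simpa using memLp_two_sqrt hg hg0)
  have hsplit : (fun x => √(f x) * √(g x)) =ᵐ[μ] fun x => √(f x * g x) := by
    filter_upwards [hf0] with x hx
    exact (sqrt_mul hx _).symm
  rw [integral_congr_ae hsplit, integral_sqrt_rpow_two hf0, integral_sqrt_rpow_two hg0,
    ← sqrt_eq_rpow, ← sqrt_eq_rpow, ← sqrt_mul (integral_nonneg_of_ae hf0)] at holder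
  calc (∫ x, √(f x * g x) ∂μ) ^ 2
      ≤ √((∫ x, f x ∂μ) * ∫ x, g x ∂μ) ^ 2 :=
        pow_le_pow_left₀ (integral_nonneg fun x => sqrt_nonneg _) holder 2
    _ = (∫ x, f x ∂μ) * ∫ x, g x ∂μ :=
        sq_sqrt (mul_nonneg (integral_nonneg_of_ae hf0) (integral_nonneg_of_ae hg0))

end CauchySchwarz

theorem sq_integral_sqrt_sq_sub_one_le_of_one_le {α : Type*} [MeasurableSpace α]
    {μ : Measure α} [IsFiniteMeasure μ] {k : α → ℝ} (hk : Integrable k μ)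
    (hk1 : ∀ᵐ x ∂μ, 1 ≤ k x) :
    (∫ x, √(k x ^ 2 - 1) ∂μ) ^ 2 ≤ (∫ x, k x ∂μ) ^ 2 - μ.real univ ^ 2 := by
  have hfactor (x : α) : k x ^ 2 - 1 = (k x - 1) * (k x + 1) := by ring
  have cs := sq_integral_sqrt_mul_le (f := fun x => k x - 1) (g := fun x => k x + 1)
    (hk.sub (integrable_const 1)) (hk.add (integrable_const 1))
    (by filter_upwards [hk1] with x hx; simp only [Pi.zero_apply]; linarith)
    (by filter_upwards [hk1] with x hx; simp only [Pi.zero_apply]; linarith)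
  rw [integral_sub hk (integrable_const 1), integral_add hk (integrable_const 1),
    integral_const, smul_eq_mul, mul_one] at cs
  simp_rw [hfactor]
  linarith

/-- The Cauchy–Schwarz step for the hyperbolic billiard bound:
if `k ≥ 1` a.e. on `[0,P]`, then `(∫₀^P √(k² − 1))² ≤ (∫₀^P k)² − P²`. -/
theorem sq_integral_sqrt_sq_sub_one_le (P : ℝ) (hP : 0 < P) (k : ℝ → ℝ)
    (hk : IntegrableOn k (Icc (0 : ℝ) P) volume)
    (hk1 : ∀ᵐ x ∂(volume.restrict (Icc (0 : ℝ) P)), 1 ≤ k x) :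
    (∫ x in (0 : ℝ)..P, Real.sqrt (k x ^ 2 - 1)) ^ 2 ≤
      (∫ x in (0 : ℝ)..P, k x) ^ 2 - P ^ 2 := by
  have hlength : (volume.restrict (Icc (0 : ℝ) P)).real univ = P := by
    simp [hP.le]
  simp only [intervalIntegral.integral_of_le hP.le, ← integral_Icc_eq_integral_Ioc]
  simpa only [hlength] using sq_integral_sqrt_sq_sub_one_le_of_one_le hk hk1
end

section
/- Let P > 0 and let k : [0,P] → ℝ be Lebesgue-integrable. Then (∫₀^P k(x) dx)² + P² ≤ (∫₀^P √(k(x)² + 1) dx)². -/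
open MeasureTheory Real Set

/-! Regard `x ↦ k x + i` as a complex-valued function `F`. The triangle inequality for integrals,
`‖∫ F‖ ≤ ∫ ‖F‖`, is the claim: `‖∫ F‖ = √((∫ k)² + P²)` and `‖F x‖ = √(k x² + 1)`. -/

theorem sqrt_sq_integral_add_sq_integral_le_integral_sqrt {α : Type*} [MeasurableSpace α]
    {μ : Measure α} {f g : α → ℝ} (hf : Integrable f μ) (hg : Integrable g μ) :
    √((∫ x, f x ∂μ) ^ 2 + (∫ x, g x ∂μ) ^ 2) ≤ ∫ x, √(f x ^ 2 + g x ^ 2) ∂μ := by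
  set F : α → ℂ := fun x ↦ f x + g x * Complex.I
  have hF : Integrable F μ := hf.ofReal.add (hg.ofReal.mul_const _)
  have hF_int : ∫ x, F x ∂μ = (∫ x, f x ∂μ : ℝ) + (∫ x, g x ∂μ : ℝ) * Complex.I := by
    rw [integral_add hf.ofReal (hg.ofReal.mul_const _), integral_mul_const,
      integral_complex_ofReal, integral_complex_ofReal]
  have h_norm (a b : ℝ) : ‖(a : ℂ) + b * Complex.I‖ = √(a ^ 2 + b ^ 2) := by
    simp [Complex.norm_eq_sqrt_sq_add_sq]
  calc √((∫ x, f x ∂μ) ^ 2 + (∫ x, g x ∂μ) ^ 2) = ‖∫ x, F x ∂μ‖ := by rw [hF_int, h_norm]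
    _ ≤ ∫ x, ‖F x‖ ∂μ := norm_integral_le_integral_norm F
    _ = ∫ x, √(f x ^ 2 + g x ^ 2) ∂μ := by simp only [F, h_norm]

theorem sq_integral_add_sq_integral_le_sq_integral_sqrt {α : Type*} [MeasurableSpace α]
    {μ : Measure α} {f g : α → ℝ} (hf : Integrable f μ) (hg : Integrable g μ) :
    (∫ x, f x ∂μ) ^ 2 + (∫ x, g x ∂μ) ^ 2 ≤ (∫ x, √(f x ^ 2 + g x ^ 2) ∂μ) ^ 2 := by
  have h := sqrt_sq_integral_add_sq_integral_le_integral_sqrt hf hg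
  rwa [sqrt_le_left (by positivity)] at h

/-- The Cauchy–Schwarz step for the hemisphere billiard bound:
`(∫₀^P k)² + P² ≤ (∫₀^P √(k² + 1))²`. -/
theorem sq_integral_add_sq_le_sq_integral_sqrt (P : ℝ) (hP : 0 < P) (k : ℝ → ℝ)
    (hk : IntegrableOn k (Icc (0 : ℝ) P) volume) :
    (∫ x in (0 : ℝ)..P, k x) ^ 2 + P ^ 2 ≤
      (∫ x in (0 : ℝ)..P, Real.sqrt (k x ^ 2 + 1)) ^ 2 := by
  have hk' : IntegrableOn k (Ioc 0 P) := hk.mono_set Ioc_subset_Icc_self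
  have h_one : ∫ _ in Ioc 0 P, (1 : ℝ) = P := by simp [hP.le]
  have h := sq_integral_add_sq_integral_le_sq_integral_sqrt hk' (integrable_const (1 : ℝ))
  simp only [h_one, one_pow] at h
  rwa [intervalIntegral.integral_of_le hP.le, intervalIntegral.integral_of_le hP.le]
end
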